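/- arXiv:1203.4534 — 9 statements merged into one kernel-verified Lean document; each statement's English description precedes it below -/
import Mathlib

section
/- Let n ≥ 3 and let I ⊆ ℝ be an open interval. Let γ : I → (symmetric positive-definite (n−1)×(n−1) real matrices) be twice differentiable and Ω : I → (0,∞) be twice differentiable, and set g(r) := Ω(r)²·γ(r), τ(r) := (1/2)·tr(g(r)⁻¹·g′(r)), and σ(r) := the trace-free part of (1/2)·g(r)⁻¹·g′(r). Then the vacuum Raychaudhuri constraint τ′ + tr(σ²) + τ²/(n−1) = 0 holds on I if and only if Ω satisfies on I the linear second-order ODE Ω″ + (Ω/(n−1))·[ (1/2)·(tr(γ⁻¹γ′))′ + (1/4)·tr((γ⁻¹γ′)²) ] + (1/(n−1))·tr(γ⁻¹γ′)·Ω′ = 0. -/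
open Matrix Set

/-! Write `Γ = γ⁻¹γ'`. Then `g⁻¹g' = (2Ω'/Ω) • 1 + Γ`, so `τ = (n-1)Ω'/Ω + ½ tr Γ`, and since
taking the trace-free part kills multiples of the identity, `σ` is half the trace-free part
of `Γ`, whence `tr σ² = ¼ (tr Γ² - (tr Γ)²/(n-1))`. Substituting, the cross terms in `(Ω'/Ω)²`
and `(tr Γ)²` cancel and the Raychaudhuri expression becomes `(n-1)/Ω` times the left side of
the ODE; as `Ω > 0`, one vanishes exactly when the other does. -/

namespace Matrix

variable {m : Type*} [Fintype m] [DecidableEq m]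

section Differentiability

variable {𝕜 : Type*} [NontriviallyNormedField 𝕜] {M N : 𝕜 → Matrix m m 𝕜} {x : 𝕜}

theorem differentiableAt_det (hM : ∀ i j, DifferentiableAt 𝕜 (fun y => M y i j) x) :
    DifferentiableAt 𝕜 (fun y => (M y).det) x := by
  simp only [det_apply']
  exact DifferentiableAt.fun_sum fun σ _ =>
    (DifferentiableAt.fun_finsetProd fun i _ => hM (σ i) i).const_mul _

theorem differentiableAt_adjugate_apply (hM : ∀ i j, DifferentiableAt 𝕜 (fun y => M y i j) x)
    (i j : m) : DifferentiableAt 𝕜 (fun y => (M y).adjugate i j) x := by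
  simp only [adjugate_apply]
  refine differentiableAt_det fun k l => ?_
  rcases eq_or_ne k j with rfl | hkj
  · simpa only [updateRow_self] using differentiableAt_const _
  · simpa only [updateRow_ne hkj] using hM k l

theorem differentiableAt_inv_apply (hM : ∀ i j, DifferentiableAt 𝕜 (fun y => M y i j) x)
    (hdet : (M x).det ≠ 0) (i j : m) : DifferentiableAt 𝕜 (fun y => (M y)⁻¹ i j) x := by
  simp only [inv_def, Ring.inverse_eq_inv, smul_apply, smul_eq_mul]
  exact ((differentiableAt_det hM).inv hdet).mul (differentiableAt_adjugate_apply hM i j)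

theorem differentiableAt_trace_inv_mul (hM : ∀ i j, DifferentiableAt 𝕜 (fun y => M y i j) x)
    (hN : ∀ i j, DifferentiableAt 𝕜 (fun y => N y i j) x) (hdet : (M x).det ≠ 0) :
    DifferentiableAt 𝕜 (fun y => ((M y)⁻¹ * N y).trace) x := by
  simp only [trace, diag, mul_apply]
  exact DifferentiableAt.fun_sum fun i _ => DifferentiableAt.fun_sum fun j _ =>
    (differentiableAt_inv_apply hM hdet i j).mul (hN j i)

end Differentiability

variable {K : Type*} [Field K]

def traceFree (M : Matrix m m K) : Matrix m m K := M - (M.trace / Fintype.card m) • 1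

theorem traceFree_smul (c : K) (M : Matrix m m K) : traceFree (c • M) = c • traceFree M := by
  simp only [traceFree, trace_smul, smul_sub, smul_smul, smul_eq_mul, mul_div_assoc]

theorem traceFree_smul_one_add (hm : (Fintype.card m : K) ≠ 0) (c : K) (M : Matrix m m K) :
    traceFree (c • 1 + M) = traceFree M := by
  simp only [traceFree, trace_add, trace_smul, trace_one, smul_eq_mul, add_div,
    mul_div_cancel_right₀ _ hm, add_smul]
  abel

theorem trace_traceFree_mul_self (M : Matrix m m K) :
    (traceFree M * traceFree M).trace = (M * M).trace - M.trace ^ 2 / Fintype.card m := by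
  by_cases hm : (Fintype.card m : K) = 0
  · simp [traceFree, hm]
  · simp only [traceFree, sub_mul, mul_sub, Matrix.smul_mul, Matrix.mul_smul, Matrix.one_mul,
      Matrix.mul_one, smul_smul, trace_sub, trace_smul, trace_one, smul_eq_mul]
    field_simp
    ring

theorem inv_smul_mul_add_smul {A : Matrix m m K} (hA : IsUnit A.det)
    (B : Matrix m m K) {k : K} (hk : k ≠ 0) (l : K) :
    (k • A)⁻¹ * (l • A + k • B) = (l / k) • 1 + A⁻¹ * B := by
  have hinv : (k • A)⁻¹ = k⁻¹ • A⁻¹ := inv_smul' A (Units.mk0 k hk) hA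
  rw [hinv, Matrix.mul_add, smul_mul_smul, smul_mul_smul, nonsing_inv_mul _ hA,
    inv_mul_cancel₀ hk, one_smul, inv_mul_eq_div]

end Matrix

theorem raychaudhuri_eq_mul_conformal_ODE {K : Type*} [Field K] [CharZero K]
    {d Ω Ω' Ω'' T T' Q : K} (hd : d ≠ 0) (hΩ : Ω ≠ 0) :
    d * ((Ω'' * Ω - Ω' * Ω') / Ω ^ 2) + 1 / 2 * T' + 1 / 4 * (Q - T ^ 2 / d)
        + (d * (Ω' / Ω) + 1 / 2 * T) ^ 2 / d
      = d / Ω * (Ω'' + Ω / d * (1 / 2 * T' + 1 / 4 * Q) + 1 / d * T * Ω') := by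
  field_simp
  ring

/-- Rendall's reduction: in the affine gauge, the vacuum Raychaudhuri constraint for
`g = Ω²γ` is equivalent to a linear second-order ODE for the conformal factor `Ω`. -/
theorem raychaudhuri_iff_conformal_ODE (n : ℕ) (hn : 3 ≤ n) (a b : ℝ)
    (γ γ' γ'' : ℝ → Matrix (Fin (n-1)) (Fin (n-1)) ℝ)
    (Ω Ω' Ω'' : ℝ → ℝ)
    (hγpd : ∀ r ∈ Ioo a b, (γ r).PosDef)
    (hγ' : ∀ r ∈ Ioo a b, ∀ i j, HasDerivAt (fun s => γ s i j) (γ' r i j) r)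
    (hγ'' : ∀ r ∈ Ioo a b, ∀ i j, HasDerivAt (fun s => γ' s i j) (γ'' r i j) r)
    (hΩpos : ∀ r ∈ Ioo a b, 0 < Ω r)
    (hΩ' : ∀ r ∈ Ioo a b, HasDerivAt Ω (Ω' r) r)
    (hΩ'' : ∀ r ∈ Ioo a b, HasDerivAt Ω' (Ω'' r) r)
    (g g' : ℝ → Matrix (Fin (n-1)) (Fin (n-1)) ℝ)
    (hg : ∀ r, g r = (Ω r)^2 • γ r)
    (hg' : ∀ r, g' r = (2 * Ω r * Ω' r) • γ r + (Ω r)^2 • γ' r)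
    (τ : ℝ → ℝ) (hτ : ∀ r, τ r = (1/2 : ℝ) * ((g r)⁻¹ * g' r).trace)
    (σ : ℝ → Matrix (Fin (n-1)) (Fin (n-1)) ℝ)
    (hσ : ∀ r, σ r = (1/2 : ℝ) • ((g r)⁻¹ * g' r) - (τ r / ((n:ℝ)-1)) • 1) :
    (∀ r ∈ Ioo a b, deriv τ r + (σ r * σ r).trace + (τ r)^2 / ((n:ℝ)-1) = 0)
      ↔
    (∀ r ∈ Ioo a b,
      Ω'' r + (Ω r / ((n:ℝ)-1)) *
          ((1/2 : ℝ) * deriv (fun s => ((γ s)⁻¹ * γ' s).trace) r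
            + (1/4 : ℝ) * (((γ r)⁻¹ * γ' r) * ((γ r)⁻¹ * γ' r)).trace)
        + (1/((n:ℝ)-1)) * ((γ r)⁻¹ * γ' r).trace * Ω' r = 0) := by
  have hd : (0 : ℝ) < (n : ℝ) - 1 := sub_pos.2 (by exact_mod_cast (by omega : 1 < n))
  have hcard : (Fintype.card (Fin (n-1)) : ℝ) = (n : ℝ) - 1 := by
    simp [Nat.cast_sub (by omega : 1 ≤ n)]
  have hX : ∀ s ∈ Ioo a b,
      (g s)⁻¹ * g' s = (2 * Ω s * Ω' s / Ω s ^ 2) • 1 + (γ s)⁻¹ * γ' s := by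
    intro s hs
    rw [hg, hg', inv_smul_mul_add_smul (hγpd s hs).det_pos.ne'.isUnit _
      (pow_ne_zero 2 (hΩpos s hs).ne')]
  have hτX : ∀ s ∈ Ioo a b,
      τ s = ((n : ℝ) - 1) * (Ω' s / Ω s) + 1 / 2 * ((γ s)⁻¹ * γ' s).trace := by
    intro s hs
    have := (hΩpos s hs).ne'
    rw [hτ, hX s hs, trace_add, trace_smul, trace_one, hcard, smul_eq_mul]
    field_simp
  refine forall₂_congr fun r hr => ?_
  have hΩr := (hΩpos r hr).ne'
  have hτ' : HasDerivAt τ (((n : ℝ) - 1) * ((Ω'' r * Ω r - Ω' r * Ω' r) / Ω r ^ 2)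
      + 1 / 2 * deriv (fun s => ((γ s)⁻¹ * γ' s).trace) r) r := by
    refine HasDerivAt.congr_of_eventuallyEq ?_
      (Filter.eventually_of_mem (isOpen_Ioo.mem_nhds hr) hτX)
    refine (((hΩ'' r hr).div (hΩ' r hr) hΩr).const_mul _).add (HasDerivAt.const_mul _ ?_)
    exact (differentiableAt_trace_inv_mul (fun i j => (hγ' r hr i j).differentiableAt)
      (fun i j => (hγ'' r hr i j).differentiableAt) (hγpd r hr).det_pos.ne').hasDerivAt
  have hσσ : (σ r * σ r).trace = 1 / 4 * ((((γ r)⁻¹ * γ' r) * ((γ r)⁻¹ * γ' r)).trace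
      - ((γ r)⁻¹ * γ' r).trace ^ 2 / ((n : ℝ) - 1)) := by
    have hσΓ : σ r = (1 / 2 : ℝ) • traceFree ((γ r)⁻¹ * γ' r) := by
      rw [← traceFree_smul_one_add (by rw [hcard]; exact hd.ne') (2 * Ω r * Ω' r / Ω r ^ 2),
        ← hX r hr, ← traceFree_smul, hσ, traceFree, trace_smul, hτ, hcard, smul_eq_mul]
    rw [hσΓ, smul_mul_smul, trace_smul, trace_traceFree_mul_self, hcard, smul_eq_mul]
    ring
  rw [hτ'.deriv, hσσ, hτX r hr, raychaudhuri_eq_mul_conformal_ODE hd.ne' hΩr, mul_eq_zero,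
    or_iff_right (div_ne_zero hd.ne' hΩr)]
end

section
/- Let n ≥ 2, ε > 0, C ≥ 0, and let τ̊ : (0, ε] → ℝ be continuous with |τ̊(s) − (n−1)/s| ≤ C·s for all s ∈ (0, ε]. Define r(s) := ∫_{ε}^{s} exp( −(1/(n−1))·∫_{ε}^{u} τ̊(v) dv ) du for s ∈ (0, ε]. Then there exist constants A ∈ ℝ, B > 0 and C′ ≥ 0 such that |r(s) − A − B·log s| ≤ C′·s² for all s ∈ (0, ε]. In particular r(s) → −∞ as s → 0⁺. -/
open Set Filter Topology MeasureTheory Real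

/-!
Write `m = n - 1`. Subtracting the singular part `m / v` from `τ̊` leaves an `O(v)` remainder,
so `∫_ε^u τ̊ = A₁ + m log u + O(u²)`. Exponentiating, the integrand of `r` is
`B / u · exp(O(u²)) = B / u + O(u)` with `B > 0`, and the same integration step once more gives
`r(s) = A + B log s + O(s²)`, which tends to `-∞` because `B > 0`.
-/

lemma abs_exp_sub_one_le_abs_mul_exp_abs (x : ℝ) : |exp x - 1| ≤ |x| * exp |x| := by
  rcases le_or_gt 0 x with hx | hx
  · have h : 1 - x ≤ exp (-x) := one_sub_le_exp_neg x
    have h1 : exp (-x) * exp x = 1 := by rw [← exp_add, neg_add_cancel, exp_zero]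
    rw [abs_of_nonneg (sub_nonneg.2 (one_le_exp hx)), abs_of_nonneg hx]
    nlinarith [exp_pos x]
  · have h : x + 1 ≤ exp x := add_one_le_exp x
    rw [abs_of_nonpos (sub_nonpos.2 (exp_le_one_iff.2 hx.le)), abs_of_neg hx]
    nlinarith [one_le_exp (neg_nonneg.2 hx.le)]

lemma integrableOn_Ioc_zero_of_abs_le_mul {g : ℝ → ℝ} {ε C : ℝ}
    (hg : ContinuousOn g (Ioc 0 ε)) (hbd : ∀ v ∈ Ioc 0 ε, |g v| ≤ C * v) :
    IntegrableOn g (Ioc 0 ε) :=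
  (continuous_const.mul continuous_id).integrableOn_Ioc.mono'
    (hg.aestronglyMeasurable measurableSet_Ioc)
    ((ae_restrict_iff' measurableSet_Ioc).2 (.of_forall hbd))

lemma abs_integral_zero_le_of_abs_le_mul {g : ℝ → ℝ} {s C : ℝ} (hs : 0 ≤ s)
    (hbd : ∀ v ∈ Ioc 0 s, |g v| ≤ C * v) : |∫ v in 0..s, g v| ≤ C / 2 * s ^ 2 :=
  calc |∫ v in 0..s, g v| = ‖∫ v in 0..s, g v‖ := (norm_eq_abs _).symm
    _ ≤ ∫ v in 0..s, C * v :=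
        intervalIntegral.norm_integral_le_of_norm_le hs (.of_forall hbd)
          ((continuous_const.mul continuous_id).intervalIntegrable 0 s)
    _ = C / 2 * s ^ 2 := by rw [intervalIntegral.integral_const_mul, integral_id]; ring

lemma integral_const_div_of_pos {a ε s : ℝ} (hε : 0 < ε) (hs : 0 < s) :
    ∫ v in ε..s, a / v = a * (log s - log ε) := by
  have h0 : (0 : ℝ) ∉ uIcc ε s := fun h => (lt_min hε hs).not_ge h.1
  simp_rw [div_eq_mul_inv]
  rw [intervalIntegral.integral_const_mul, integral_inv h0, log_div hs.ne' hε.ne']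

/-- The remainder `f v - a / v` is `O(v)`, hence integrable up to `0`; its primitive from `0`
is the `O(s²)` correction `E`. -/
theorem exists_integral_eq_const_add_mul_log_add {f : ℝ → ℝ} {a ε C : ℝ} (hε : 0 < ε)
    (hf : ContinuousOn f (Ioc 0 ε)) (hbd : ∀ v ∈ Ioc 0 ε, |f v - a / v| ≤ C * v) :
    ∃ A : ℝ, ∃ E : ℝ → ℝ, ContinuousOn E (Ioc 0 ε) ∧
      (∀ s ∈ Ioc 0 ε, |E s| ≤ C / 2 * s ^ 2) ∧
      ∀ s ∈ Ioc 0 ε, ∫ v in ε..s, f v = A + a * log s + E s := by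
  set g : ℝ → ℝ := fun v => f v - a / v
  have hg : IntervalIntegrable g volume 0 ε := by
    refine (intervalIntegrable_iff_integrableOn_Ioc_of_le hε.le).2
      (integrableOn_Ioc_zero_of_abs_le_mul ?_ hbd)
    exact hf.sub (continuousOn_const.div continuousOn_id fun v hv => hv.1.ne')
  have hgI : ∀ s ∈ Ioc 0 ε, IntervalIntegrable g volume 0 s := fun s hs =>
    hg.mono_set (uIcc_subset_uIcc left_mem_uIcc (mem_uIcc_of_le hs.1.le hs.2))
  have hE : ContinuousOn (fun s => ∫ v in 0..s, g v) (Ioc 0 ε) :=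
    (intervalIntegral.continuousOn_primitive_interval' hg left_mem_uIcc).mono
      fun s hs => mem_uIcc_of_le hs.1.le hs.2
  refine ⟨-(a * log ε) - ∫ v in 0..ε, g v, fun s => ∫ v in 0..s, g v, hE, fun s hs => ?_,
    fun s hs => ?_⟩
  · exact abs_integral_zero_le_of_abs_le_mul hs.1.le fun v hv => hbd v ⟨hv.1, hv.2.trans hs.2⟩
  · have hinv : IntervalIntegrable (fun v => a / v) volume ε s :=
      (continuousOn_const.div continuousOn_id fun v hv =>
        ((lt_min hε hs.1).trans_le hv.1).ne').intervalIntegrable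
    have hgε := hgI ε ⟨hε, le_rfl⟩
    calc ∫ v in ε..s, f v = ∫ v in ε..s, (a / v + g v) := by simp only [g, add_sub_cancel]
      _ = a * (log s - log ε) + ((∫ v in 0..s, g v) - ∫ v in 0..ε, g v) := by
        rw [intervalIntegral.integral_add hinv (hgε.symm.trans (hgI s hs)),
          integral_const_div_of_pos hε hs.1,
          intervalIntegral.integral_interval_sub_left (hgI s hs) hgε]
      _ = _ := by ring

lemma exists_abs_exp_sub_div_le {m A c ε : ℝ} {E : ℝ → ℝ} (hm : 0 < m) (hc : 0 ≤ c)
    (hE : ∀ u ∈ Ioc 0 ε, |E u| ≤ c * u ^ 2) :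
    ∃ B L : ℝ, 0 < B ∧ 0 ≤ L ∧
      ∀ u ∈ Ioc 0 ε, |exp (-(1 / m) * (A + m * log u + E u)) - B / u| ≤ L * u := by
  set B := exp (-(A / m))
  refine ⟨B, B * (c / m) * exp (c * ε ^ 2 / m), exp_pos _, by positivity, fun u hu => ?_⟩
  have hu0 := hu.1
  have hx : |E u / m| ≤ c * u ^ 2 / m := by
    rw [abs_div, abs_of_pos hm]; gcongr; exact hE u hu
  have hxε : |E u / m| ≤ c * ε ^ 2 / m := hx.trans (by gcongr; exact hu.2)
  have hsplit : exp (-(1 / m) * (A + m * log u + E u)) = B / u * exp (-(E u / m)) := by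
    have : -(1 / m) * (A + m * log u + E u) = -(A / m) + -log u + -(E u / m) := by
      field_simp; ring
    rw [this, exp_add, exp_add, exp_neg (log u), exp_log hu0]
    ring
  calc |exp (-(1 / m) * (A + m * log u + E u)) - B / u|
      = B / u * |exp (-(E u / m)) - 1| := by
        rw [hsplit, ← mul_sub_one, abs_mul, abs_of_pos (by positivity)]
    _ ≤ B / u * (c * u ^ 2 / m * exp (c * ε ^ 2 / m)) := by
        gcongr
        refine (abs_exp_sub_one_le_abs_mul_exp_abs _).trans ?_
        rw [abs_neg]
        exact mul_le_mul hx (exp_le_exp.2 hxε) (exp_pos _).le (by positivity)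
    _ = B * (c / m) * exp (c * ε ^ 2 / m) * u := by field_simp

lemma tendsto_nhdsGT_zero_atBot_of_abs_sub_log_le {r : ℝ → ℝ} {A B K ε : ℝ} (hε : 0 < ε)
    (hB : 0 < B) (h : ∀ s ∈ Ioc 0 ε, |r s - A - B * log s| ≤ K * s ^ 2) :
    Tendsto r (𝓝[>] 0) atBot := by
  have hK : Tendsto (fun s : ℝ => K * s ^ 2) (𝓝[>] 0) (𝓝 (K * 0 ^ 2)) :=
    (continuous_const.mul (continuous_pow 2)).continuousAt.tendsto.mono_left nhdsWithin_le_nhds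
  have hlog := tendsto_atBot_add_const_left _ A (tendsto_log_nhdsGT_zero.const_mul_atBot hB)
  refine tendsto_atBot_mono' _ ?_ (hlog.atBot_add hK)
  filter_upwards [Ioc_mem_nhdsGT hε] with s hs
  linarith [(abs_le.1 (h s hs)).2]

/-- For `τ̊(s) = (n−1)/s + O(s)`, the Hayward-gauge parameter
`r(s) = ∫_ε^s exp(−(1/(n−1))∫_ε^u τ̊) du` satisfies `r(s) = A + B·log s + O(s²)` with
`B > 0`; in particular `r(s) → −∞` as `s → 0⁺`. -/
theorem vertex_at_minus_infinity_in_Hayward_gauge (n : ℕ) (hn : 2 ≤ n)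
    (ε C : ℝ) (hε : 0 < ε) (hC : 0 ≤ C)
    (τO : ℝ → ℝ) (hcont : ContinuousOn τO (Ioc 0 ε))
    (hbd : ∀ s ∈ Ioc 0 ε, |τO s - ((n:ℝ)-1)/s| ≤ C * s)
    (r : ℝ → ℝ)
    (hr : ∀ s, r s = ∫ u in ε..s, Real.exp (-(1/((n:ℝ)-1)) * ∫ v in ε..u, τO v)) :
    (∃ A B C' : ℝ, 0 < B ∧ 0 ≤ C' ∧
      ∀ s ∈ Ioc 0 ε, |r s - A - B * Real.log s| ≤ C' * s^2) ∧
    Tendsto r (𝓝[>] (0:ℝ)) atBot := by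
  set m : ℝ := (n : ℝ) - 1
  have hm : 0 < m := by
    have : (2 : ℝ) ≤ n := by exact_mod_cast hn
    linarith
  obtain ⟨A₁, E₁, hE₁c, hE₁, hτ⟩ := exists_integral_eq_const_add_mul_log_add hε hcont hbd
  obtain ⟨B, L, hB, hL, hF⟩ := exists_abs_exp_sub_div_le (A := A₁) hm (by positivity) hE₁
  have hFc : ContinuousOn (fun u => exp (-(1 / m) * ∫ v in ε..u, τO v)) (Ioc 0 ε) := by
    refine ContinuousOn.congr ?_ fun u hu => by rw [hτ u hu]
    have hlog : ContinuousOn log (Ioc 0 ε) := continuousOn_log.mono fun u hu => hu.1.ne'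
    exact (continuousOn_const.mul
      ((continuousOn_const.add (continuousOn_const.mul hlog)).add hE₁c)).rexp
  obtain ⟨A₂, E₂, -, hE₂, hrF⟩ := exists_integral_eq_const_add_mul_log_add hε hFc
    fun u hu => by rw [hτ u hu]; exact hF u hu
  have hasymp : ∀ s ∈ Ioc 0 ε, |r s - A₂ - B * log s| ≤ L / 2 * s ^ 2 := fun s hs => by
    have : r s - A₂ - B * log s = E₂ s := by rw [hr s, hrF s hs]; ring
    exact this ▸ hE₂ s hs
  exact ⟨⟨A₂, B, L / 2, hB, by positivity, hasymp⟩,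
    tendsto_nhdsGT_zero_atBot_of_abs_sub_log_le hε hB hasymp⟩
end

section
/- Let C ≥ 0 and ε > 0, and let h : (0, ε) → ℝ be differentiable with |h(s)| ≤ C·s² and |h′(s)| ≤ C·s for all s ∈ (0, ε). Define r(s) := log s + h(s). Then there exists ε′ ∈ (0, ε] such that r is strictly increasing on (0, ε′), r maps (0, ε′) bijectively onto an interval of the form (−∞, R), and the inverse function s(r) satisfies: there exists C′ ≥ 0 and R′ ≤ R such that |s(r) − e^{r}| ≤ C′·e^{3r} for all r ≤ R′. -/
open Set

/-- For `r(s) = log s + h(s)` with `h = O(s²)`, `h′ = O(s)`, the map `r` is eventually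
strictly increasing, maps `(0,ε′)` bijectively onto an interval `(−∞,R)`, and its
inverse satisfies `s(ρ) = e^ρ + O(e^{3ρ})`. -/
theorem inverse_gauge_transformation_expansion (C ε : ℝ) (hC : 0 ≤ C) (hε : 0 < ε)
    (h h' : ℝ → ℝ)
    (hderiv : ∀ s ∈ Ioo 0 ε, HasDerivAt h (h' s) s)
    (hb : ∀ s ∈ Ioo 0 ε, |h s| ≤ C * s^2)
    (hb' : ∀ s ∈ Ioo 0 ε, |h' s| ≤ C * s)
    (r : ℝ → ℝ) (hr : ∀ s, r s = Real.log s + h s) :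
    ∃ ε', 0 < ε' ∧ ε' ≤ ε ∧ StrictMonoOn r (Ioo 0 ε') ∧
      ∃ R : ℝ, Set.BijOn r (Ioo 0 ε') (Iio R) ∧
        ∃ sfun : ℝ → ℝ,
          (∀ ρ ∈ Iio R, sfun ρ ∈ Ioo 0 ε' ∧ r (sfun ρ) = ρ) ∧
          ∃ C' R' : ℝ, 0 ≤ C' ∧ R' ≤ R ∧
            ∀ ρ ≤ R', |sfun ρ - Real.exp ρ| ≤ C' * Real.exp (3*ρ) := by
  have hCpos : (0:ℝ) < C + 1 := by linarith
  set ε' := min ε (1/(C+1)) with hε'def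
  have hε'pos : 0 < ε' := lt_min hε (by positivity)
  have hε'le : ε' ≤ ε := min_le_left _ _
  have hsub : Ioo 0 ε' ⊆ Ioo 0 ε := Ioo_subset_Ioo le_rfl hε'le
  have hsmall : ∀ s ∈ Ioo (0:ℝ) ε', C * s^2 < 1 := by
    intro s hs
    have hs1 : s < 1/(C+1) := lt_of_lt_of_le hs.2 (min_le_right _ _)
    have hs0 := hs.1
    have h2 : s < 1 := by
      have : 1/(C+1) ≤ 1 := by
        rw [div_le_one hCpos]; linarith
      linarith
    have h3 : s * (C+1) < 1 := (lt_div_iff₀ hCpos).mp hs1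
    nlinarith [h3, hs0, h2, hC]
  have hrd : ∀ s ∈ Ioo (0:ℝ) ε', HasDerivAt r (s⁻¹ + h' s) s := by
    intro s hs
    have : HasDerivAt (fun t => Real.log t + h t) (s⁻¹ + h' s) s :=
      (Real.hasDerivAt_log (ne_of_gt hs.1)).add (hderiv s (hsub hs))
    exact this.congr_of_eventuallyEq (Filter.Eventually.of_forall fun t => (hr t))
  have hcont : ContinuousOn r (Ioo 0 ε') :=
    fun s hs => ((hrd s hs).continuousAt).continuousWithinAt
  have hmono : StrictMonoOn r (Ioo 0 ε') := by
    apply strictMonoOn_of_deriv_pos (convex_Ioo _ _) hcont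
    intro s hs
    rw [interior_Ioo] at hs
    rw [(hrd s hs).deriv]
    have hs0 := hs.1
    have h1 : |h' s| ≤ C * s := hb' s (hsub hs)
    have h2 : C * s^2 < 1 := hsmall s hs
    have h3 : -(C*s) ≤ h' s := (abs_le.mp h1).1
    have hinv : s * s⁻¹ = 1 := mul_inv_cancel₀ (ne_of_gt hs0)
    nlinarith [mul_pos hs0 (inv_pos.mpr hs0)]
  refine ⟨ε', hε'pos, hε'le, hmono, ?_⟩
  set S := Ioo (0:ℝ) ε' with hSdef
  set R := sSup (r '' S) with hRdef
  have hne : (r '' S).Nonempty := ⟨r (ε'/2), ⟨ε'/2, ⟨by linarith, by linarith⟩, rfl⟩⟩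
  have hbdd : BddAbove (r '' S) := by
    refine ⟨Real.log ε' + 1, ?_⟩
    rintro _ ⟨s, hs, rfl⟩
    rw [hr]
    have h1 : Real.log s ≤ Real.log ε' := Real.log_le_log (hs.1) (le_of_lt hs.2)
    linarith [h1, (abs_le.mp (hb s (hsub hs))).2, hsmall s hs]
  have hltR : ∀ s ∈ S, r s < R := by
    intro s hs
    have hy : (s + ε')/2 ∈ S := ⟨by cases hs with | intro a b => linarith, by cases hs with | intro a b => linarith⟩
    have : r s < r ((s + ε')/2) := hmono hs hy (by cases hs with | intro a b => linarith)
    exact lt_of_lt_of_le this (le_csSup hbdd ⟨_, hy, rfl⟩)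
  -- unboundedness below: for every ρ there is s ∈ S with r s ≤ ρ
  have hbelow : ∀ ρ : ℝ, ∃ s ∈ S, r s ≤ ρ := by
    intro ρ
    refine ⟨min (ε'/2) (Real.exp (ρ - 1)), ⟨lt_min (by linarith) (Real.exp_pos _), ?_⟩, ?_⟩
    · exact lt_of_le_of_lt (min_le_left _ _) (by linarith)
    · set s := min (ε'/2) (Real.exp (ρ - 1)) with hsd
      have hs0 : 0 < s := lt_min (by linarith) (Real.exp_pos _)
      have hsS : s ∈ S := ⟨hs0, lt_of_le_of_lt (min_le_left _ _) (by linarith)⟩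
      have h1 : Real.log s ≤ ρ - 1 := by
        calc Real.log s ≤ Real.log (Real.exp (ρ-1)) :=
              Real.log_le_log hs0 (min_le_right _ _)
          _ = ρ - 1 := Real.log_exp _
      have h2 : h s ≤ 1 :=
        le_of_lt (lt_of_le_of_lt (le_trans (le_abs_self _) (hb s (hsub hsS))) (hsmall s hsS))
      rw [hr]; linarith
  have hordc : (r '' S).OrdConnected :=
    ((isPreconnected_Ioo).image r hcont).ordConnected
  have hsurj : Iio R ⊆ r '' S := by
    intro ρ hρ
    obtain ⟨b, hb1, hb2⟩ := exists_lt_of_lt_csSup hne hρ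
    obtain ⟨s, hsS, hsρ⟩ := hbelow ρ
    exact hordc.out ⟨s, hsS, rfl⟩ hb1 ⟨hsρ, le_of_lt hb2⟩
  have hbij : Set.BijOn r S (Iio R) :=
    ⟨fun s hs => hltR s hs, hmono.injOn, fun ρ hρ => hsurj hρ⟩
  refine ⟨R, hbij, Function.invFunOn r S, ?_, ?_⟩
  · intro ρ hρ
    obtain ⟨s, hsS, hsρ⟩ := hsurj hρ
    exact ⟨Function.invFunOn_mem ⟨s, hsS, hsρ⟩, Function.invFunOn_eq ⟨s, hsS, hsρ⟩⟩
  · refine ⟨2 * C * Real.exp 2, R - 1, by positivity, by linarith, ?_⟩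
    intro ρ hρR
    have hρ : ρ ∈ Iio R := by simp only [mem_Iio]; linarith
    obtain ⟨s₀, hsS₀, hsρ₀⟩ := hsurj hρ
    set s := Function.invFunOn r S ρ with hsdef
    have hsS : s ∈ S := Function.invFunOn_mem ⟨s₀, hsS₀, hsρ₀⟩
    have hsρ : r s = ρ := Function.invFunOn_eq ⟨s₀, hsS₀, hsρ₀⟩
    have hs0 : 0 < s := hsS.1
    have hhb : |h s| ≤ C * s^2 := hb s (hsub hsS)
    have hh1 : |h s| ≤ 1 := hhb.trans (le_of_lt (hsmall s hsS))
    -- s = exp (ρ - h s)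
    have hlog : Real.log s = ρ - h s := by
      have := hr s; rw [hsρ] at this; linarith
    have hsexp : s = Real.exp (ρ - h s) := by
      rw [← hlog, Real.exp_log hs0]
    have e1 : Real.exp (ρ - h s) = Real.exp ρ * Real.exp (-h s) := by
      rw [← Real.exp_add]; ring_nf
    have hdiff : s - Real.exp ρ = Real.exp ρ * (Real.exp (-h s) - 1) := by
      rw [mul_sub, mul_one, ← e1, ← hsexp]
    have habs1 : |Real.exp (-h s) - 1| ≤ 2 * |h s| := by
      have := Real.abs_exp_sub_one_le (x := -h s) (by rwa [abs_neg])
      rwa [abs_neg] at this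
    have hsle : s ≤ Real.exp (ρ + 1) := by
      rw [hsexp]
      apply Real.exp_le_exp.mpr
      have := (abs_le.mp hh1).1
      linarith
    have hs2 : s^2 ≤ Real.exp (2*ρ + 2) := by
      have : s^2 ≤ (Real.exp (ρ+1))^2 := by
        apply pow_le_pow_left₀ (le_of_lt hs0) hsle
      calc s^2 ≤ (Real.exp (ρ+1))^2 := this
        _ = Real.exp (2*ρ + 2) := by
            rw [← Real.exp_nat_mul]
            norm_num; ring_nf
    calc |s - Real.exp ρ| = Real.exp ρ * |Real.exp (-h s) - 1| := by
          rw [hdiff, abs_mul, abs_of_pos (Real.exp_pos _)]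
      _ ≤ Real.exp ρ * (2 * |h s|) := by
          apply mul_le_mul_of_nonneg_left habs1 (le_of_lt (Real.exp_pos _))
      _ ≤ Real.exp ρ * (2 * (C * s^2)) := by
          apply mul_le_mul_of_nonneg_left (by linarith) (le_of_lt (Real.exp_pos _))
      _ ≤ Real.exp ρ * (2 * (C * Real.exp (2*ρ + 2))) := by
          apply mul_le_mul_of_nonneg_left _ (le_of_lt (Real.exp_pos _))
          apply mul_le_mul_of_nonneg_left _ (by norm_num)
          exact mul_le_mul_of_nonneg_left hs2 hC
      _ = 2 * C * Real.exp 2 * Real.exp (3*ρ) := by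
          rw [show Real.exp ρ * (2*(C*Real.exp (2*ρ+2))) = 2*C*(Real.exp ρ * Real.exp (2*ρ+2)) from by ring,
            ← Real.exp_add, show ρ + (2*ρ+2) = 2 + 3*ρ from by ring, Real.exp_add]
          ring
end

section
/- Let n ≥ 2, s₀ > 0, C ≥ 0, and let τ̊ : (0, s₀] → ℝ be continuous with |τ̊(s) − (n−1)/s| ≤ C·s for all s ∈ (0, s₀]. Let R₁ ∈ [−∞, ∞), r₀ ∈ ℝ, and let φ : (0, s₀] → (R₁, r₀] be a continuously differentiable bijection with φ′(s) > 0 for all s, and define τ : (R₁, r₀] → ℝ by τ(φ(s)) := τ̊(s)/φ′(s). Then the improper integral of τ over (R₁, r₀] diverges: lim_{ρ → R₁⁺} ∫_{ρ}^{r₀} τ(r) dr = +∞. -/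
open Set Filter Topology
open MeasureTheory Real

/-!
The substitution `r = φ(s)` turns `∫_{φ σ}^{r₀} τ dr` into `∫_σ^{s₀} τ̊ ds`, because
`τ dr = τ̊ ds`. The bound `τ̊(s) ≥ (n-1)/s - C s` gives
`∫_σ^{s₀} τ̊ ≥ (n-1) log (s₀/σ) - C (s₀² - σ²)/2`, which tends to `+∞` as `σ → 0⁺`. Finally,
`σ = φ⁻¹(ρ) → 0⁺` as `ρ → R₁⁺`, because `φ` is an increasing bijection of `(0, s₀]` onto `(R₁, r₀]`.
-/

theorem strictMonoOn_of_forall_hasDerivWithinAt_pos {D : Set ℝ} (hD : Convex ℝ D)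
    {f f' : ℝ → ℝ} (hf : ∀ x ∈ D, HasDerivWithinAt f (f' x) D x) (hf' : ∀ x ∈ D, 0 < f' x) :
    StrictMonoOn f D :=
  strictMonoOn_of_hasDerivWithinAt_pos hD (fun x hx => (hf x hx).continuousWithinAt)
    (fun x hx => (hf x (interior_subset hx)).mono interior_subset)
    (fun x hx => hf' x (interior_subset hx))

theorem StrictMonoOn.image_inter_Ioi {α β : Type*} [LinearOrder α] [Preorder β] {f : α → β}
    {s : Set α} {a : α} (hf : StrictMonoOn f s) (ha : a ∈ s) :
    f '' (s ∩ Ioi a) = f '' s ∩ Ioi (f a) := by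
  ext y
  constructor
  · rintro ⟨x, ⟨hx, hax⟩, rfl⟩
    exact ⟨mem_image_of_mem f hx, hf ha hx hax⟩
  · rintro ⟨⟨x, hx, rfl⟩, hax⟩
    exact ⟨x, ⟨hx, (hf.lt_iff_lt ha hx).1 hax⟩, rfl⟩

theorem integral_eq_of_reparam_Ioc {φ φ' f g : ℝ → ℝ} {a b c d : ℝ} (hab : a ≤ b) (hcd : c ≤ d)
    (himage : φ '' Ioc a b = Ioc c d)
    (hφ' : ∀ x ∈ Ioc a b, HasDerivWithinAt φ (φ' x) (Ioc a b) x)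
    (hpos : ∀ x ∈ Ioc a b, 0 < φ' x) (hfg : ∀ x ∈ Ioc a b, f (φ x) = g x / φ' x) :
    ∫ y in c..d, f y = ∫ x in a..b, g x := by
  have hinj : InjOn φ (Ioc a b) :=
    (strictMonoOn_of_forall_hasDerivWithinAt_pos (convex_Ioc a b) hφ' hpos).injOn
  rw [intervalIntegral.integral_of_le hcd, intervalIntegral.integral_of_le hab, ← himage,
    integral_image_eq_integral_abs_deriv_smul measurableSet_Ioc hφ' hinj]
  refine setIntegral_congr_fun measurableSet_Ioc fun x hx => ?_
  rw [smul_eq_mul, abs_of_pos (hpos x hx), hfg x hx, mul_div_cancel₀ _ (hpos x hx).ne']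

theorem intervalIntegrable_const_div {a σ s : ℝ} (h0 : (0 : ℝ) ∉ uIcc σ s) :
    IntervalIntegrable (fun x => a / x) volume σ s :=
  (continuousOn_const.div continuousOn_id fun _ hx => ne_of_mem_of_not_mem hx h0).intervalIntegrable

theorem integral_div_sub_mul (a C : ℝ) {σ s : ℝ} (h0 : (0 : ℝ) ∉ uIcc σ s) :
    ∫ x in σ..s, (a / x - C * x) = a * log (s / σ) - C * ((s ^ 2 - σ ^ 2) / 2) := by
  rw [intervalIntegral.integral_sub (intervalIntegrable_const_div h0)
    ((continuous_const_mul C).intervalIntegrable _ _)]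
  simp only [div_eq_mul_inv a]
  rw [intervalIntegral.integral_const_mul, intervalIntegral.integral_const_mul, integral_inv h0,
    integral_id]

theorem tendsto_integral_nhdsGT_zero_atTop {f : ℝ → ℝ} {a C s₀ : ℝ} (ha : 0 < a) (hs₀ : 0 < s₀)
    (hf : ContinuousOn f (Ioc 0 s₀)) (hlow : ∀ s ∈ Ioc 0 s₀, a / s - C * s ≤ f s) :
    Tendsto (fun σ => ∫ x in σ..s₀, f x) (𝓝[>] 0) atTop := by
  have hlog : Tendsto (fun σ => log (s₀ / σ)) (𝓝[>] 0) atTop :=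
    tendsto_log_atTop.comp ((tendsto_inv_nhdsGT_zero.const_mul_atTop hs₀).congr
      fun σ => (div_eq_mul_inv s₀ σ).symm)
  have hpoly : Tendsto (fun σ : ℝ => C * ((s₀ ^ 2 - σ ^ 2) / 2)) (𝓝[>] 0)
      (𝓝 (C * ((s₀ ^ 2 - 0 ^ 2) / 2))) :=
    ((by fun_prop : Continuous fun σ : ℝ => C * ((s₀ ^ 2 - σ ^ 2) / 2)).tendsto 0).mono_left
      nhdsWithin_le_nhds
  have hbound :
      Tendsto (fun σ => a * log (s₀ / σ) - C * ((s₀ ^ 2 - σ ^ 2) / 2)) (𝓝[>] 0) atTop := by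
    simpa only [sub_eq_add_neg] using (hlog.const_mul_atTop ha).atTop_add hpoly.neg
  refine tendsto_atTop_mono' _ ?_ hbound
  filter_upwards [Ioo_mem_nhdsGT hs₀] with σ hσ
  have h0 : (0 : ℝ) ∉ uIcc σ s₀ := by
    rw [uIcc_of_le hσ.2.le]
    exact fun h => hσ.1.not_ge h.1
  have hsub : Icc σ s₀ ⊆ Ioc 0 s₀ := fun x hx => ⟨hσ.1.trans_le hx.1, hx.2⟩
  rw [← integral_div_sub_mul a C h0]
  refine intervalIntegral.integral_mono_on hσ.2.le
    ((intervalIntegrable_const_div h0).sub ((continuous_const_mul C).intervalIntegrable _ _))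
    ((hf.mono hsub).intervalIntegrable_of_Icc hσ.2.le) fun x hx => hlow x (hsub hx)

theorem tendsto_invFunOn_nhdsGT_zero {φ : ℝ → ℝ} {s₀ r₀ : ℝ} {R₁ : EReal} (hs₀ : 0 < s₀)
    (hmono : StrictMonoOn φ (Ioc 0 s₀))
    (hbij : BijOn φ (Ioc 0 s₀) {x : ℝ | R₁ < (x : EReal) ∧ x ≤ r₀}) :
    Tendsto (Function.invFunOn φ (Ioc 0 s₀)) (comap (fun x : ℝ => (x : EReal)) (𝓝[>] R₁))
      (𝓝[>] 0) := by
  rw [(nhdsGT_basis 0).tendsto_right_iff]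
  intro ε hε
  set ε' := min (ε / 2) s₀
  have hε' : ε' ∈ Ioc 0 s₀ := ⟨lt_min (half_pos hε) hs₀, min_le_right _ _⟩
  have hε'ε : ε' < ε := min_lt_of_left_lt (half_lt_self hε)
  obtain ⟨hR₁ε', hε'r₀⟩ := hbij.mapsTo hε'
  filter_upwards [preimage_mem_comap (Ioc_mem_nhdsGT hR₁ε')] with ρ ⟨hR₁ρ, hρε'⟩
  have hρ : ρ ∈ {x : ℝ | R₁ < (x : EReal) ∧ x ≤ r₀} :=
    ⟨hR₁ρ, (EReal.coe_le_coe_iff.1 hρε').trans hε'r₀⟩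
  have hψρ := hbij.surjOn.mapsTo_invFunOn hρ
  refine ⟨hψρ.1, lt_of_le_of_lt ?_ hε'ε⟩
  rw [← hmono.le_iff_le hψρ hε', hbij.surjOn.rightInvOn_invFunOn hρ]
  exact EReal.coe_le_coe_iff.1 hρε'

theorem image_Ioc_of_strictMonoOn_of_bijOn {φ : ℝ → ℝ} {s₀ r₀ σ : ℝ} {R₁ : EReal}
    (hmono : StrictMonoOn φ (Ioc 0 s₀))
    (hbij : BijOn φ (Ioc 0 s₀) {x : ℝ | R₁ < (x : EReal) ∧ x ≤ r₀}) (hσ : σ ∈ Ioc 0 s₀) :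
    φ '' Ioc σ s₀ = Ioc (φ σ) r₀ := by
  have hR₁ : R₁ < (φ σ : EReal) := (hbij.mapsTo hσ).1
  have hIoc : Ioc σ s₀ = Ioc 0 s₀ ∩ Ioi σ := by rw [Ioc_inter_Ioi, sup_of_le_right hσ.1.le]
  rw [hIoc, hmono.image_inter_Ioi hσ, hbij.image_eq]
  ext x
  exact ⟨fun ⟨⟨_, hx⟩, hσx⟩ => ⟨hσx, hx⟩,
    fun ⟨hσx, hx⟩ => ⟨⟨hR₁.trans (EReal.coe_lt_coe_iff.2 hσx), hx⟩, hσx⟩⟩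

theorem integral_eq_integral_of_bijOn {φ φ' τ τO : ℝ → ℝ} {s₀ r₀ σ : ℝ} {R₁ : EReal}
    (hbij : BijOn φ (Ioc 0 s₀) {x : ℝ | R₁ < (x : EReal) ∧ x ≤ r₀})
    (hφ' : ∀ s ∈ Ioc 0 s₀, HasDerivWithinAt φ (φ' s) (Ioc 0 s₀) s)
    (hφ'pos : ∀ s ∈ Ioc 0 s₀, 0 < φ' s) (hτ : ∀ s ∈ Ioc 0 s₀, τ (φ s) = τO s / φ' s)
    (hσ : σ ∈ Ioc 0 s₀) :
    ∫ x in φ σ..r₀, τ x = ∫ s in σ..s₀, τO s := by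
  have hmono := strictMonoOn_of_forall_hasDerivWithinAt_pos (convex_Ioc 0 s₀) hφ' hφ'pos
  have hsub : Ioc σ s₀ ⊆ Ioc 0 s₀ := Ioc_subset_Ioc_left hσ.1.le
  exact integral_eq_of_reparam_Ioc hσ.2 (hbij.mapsTo hσ).2
    (image_Ioc_of_strictMonoOn_of_bijOn hmono hbij hσ) (fun x hx => (hφ' x (hsub hx)).mono hsub)
    (fun x hx => hφ'pos x (hsub hx)) (fun x hx => hτ x (hsub hx))

theorem integral_of_expansion_diverges_general (n : ℕ) (hn : 2 ≤ n)
    (s₀ C : ℝ) (hs₀ : 0 < s₀)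
    (τO : ℝ → ℝ) (hτOc : ContinuousOn τO (Ioc 0 s₀))
    (hτOb : ∀ s ∈ Ioc 0 s₀, |τO s - ((n:ℝ)-1)/s| ≤ C * s)
    (R₁ : EReal) (r₀ : ℝ) (hR₁ : R₁ < (r₀ : EReal))
    (J : Set ℝ) (hJ : J = {x : ℝ | R₁ < (x : EReal) ∧ x ≤ r₀})
    (φ φ' : ℝ → ℝ)
    (hbij : Set.BijOn φ (Ioc 0 s₀) J)
    (hφ' : ∀ s ∈ Ioc 0 s₀, HasDerivWithinAt φ (φ' s) (Ioc 0 s₀) s)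
    (hφ'pos : ∀ s ∈ Ioc 0 s₀, 0 < φ' s)
    (τ : ℝ → ℝ) (hτ : ∀ s ∈ Ioc 0 s₀, τ (φ s) = τO s / φ' s) :
    Tendsto (fun ρ : ℝ => ∫ x in ρ..r₀, τ x)
      (comap (fun x : ℝ => (x : EReal)) (𝓝[>] R₁)) atTop := by
  subst hJ
  have hmono := strictMonoOn_of_forall_hasDerivWithinAt_pos (convex_Ioc 0 s₀) hφ' hφ'pos
  have hn' : (0 : ℝ) < n - 1 := by
    have : (2 : ℝ) ≤ n := by exact_mod_cast hn
    linarith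
  have hlow : ∀ s ∈ Ioc 0 s₀, ((n : ℝ) - 1) / s - C * s ≤ τO s := fun s hs => by
    linarith [(abs_le.1 (hτOb s hs)).1]
  have hcov : ∀ᶠ ρ : ℝ in comap (fun x : ℝ => (x : EReal)) (𝓝[>] R₁),
      ∫ s in Function.invFunOn φ (Ioc 0 s₀) ρ..s₀, τO s = ∫ x in ρ..r₀, τ x := by
    filter_upwards [preimage_mem_comap (Ioc_mem_nhdsGT hR₁)] with ρ ⟨hR₁ρ, hρr₀⟩
    have hρ : R₁ < (ρ : EReal) ∧ ρ ≤ r₀ := ⟨hR₁ρ, EReal.coe_le_coe_iff.1 hρr₀⟩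
    rw [← integral_eq_integral_of_bijOn hbij hφ' hφ'pos hτ (hbij.surjOn.mapsTo_invFunOn hρ),
      hbij.surjOn.rightInvOn_invFunOn hρ]
  exact ((tendsto_integral_nhdsGT_zero_atTop hn' hs₀ hτOc hlow).comp
    (tendsto_invFunOn_nhdsGT_zero hs₀ hmono hbij)).congr' hcov

/-- For a regular light-cone expansion `τ̊(s) = (n−1)/s + O(s)` in an affine parameter `s`
and any orientation-preserving reparameterisation `r = φ(s)` onto `(R₁, r₀]`, the
transformed expansion `τ(φ(s)) = τ̊(s)/φ′(s)` has divergent integral: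
`∫_ρ^{r₀} τ → +∞` as `ρ → R₁⁺`. -/
theorem integral_of_expansion_diverges (n : ℕ) (hn : 2 ≤ n)
    (s₀ C : ℝ) (hs₀ : 0 < s₀) (hC : 0 ≤ C)
    (τO : ℝ → ℝ) (hτOc : ContinuousOn τO (Ioc 0 s₀))
    (hτOb : ∀ s ∈ Ioc 0 s₀, |τO s - ((n:ℝ)-1)/s| ≤ C * s)
    (R₁ : EReal) (r₀ : ℝ) (hR₁ : R₁ < (r₀ : EReal))
    (J : Set ℝ) (hJ : J = {x : ℝ | R₁ < (x : EReal) ∧ x ≤ r₀})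
    (φ φ' : ℝ → ℝ)
    (hbij : Set.BijOn φ (Ioc 0 s₀) J)
    (hφ' : ∀ s ∈ Ioc 0 s₀, HasDerivWithinAt φ (φ' s) (Ioc 0 s₀) s)
    (hφ'c : ContinuousOn φ' (Ioc 0 s₀))
    (hφ'pos : ∀ s ∈ Ioc 0 s₀, 0 < φ' s)
    (τ : ℝ → ℝ) (hτ : ∀ s ∈ Ioc 0 s₀, τ (φ s) = τO s / φ' s) :
    Tendsto (fun ρ : ℝ => ∫ x in ρ..r₀, τ x)
      (comap (fun x : ℝ => (x : EReal)) (𝓝[>] R₁)) atTop :=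
  integral_of_expansion_diverges_general n hn s₀ C hs₀ τO hτOc hτOb R₁ r₀ hR₁ J hJ φ φ' hbij hφ'
    hφ'pos τ hτ
end

section
/- Let n ≥ 2, s₀ > 0, C ≥ 0, and let τ̊ : (0, s₀] → ℝ be continuous with |τ̊(s) − (n−1)/s| ≤ C·s for all s ∈ (0, s₀]. Let R₁ ∈ [−∞, ∞), r₀ ∈ ℝ, let φ : (0, s₀] → (R₁, r₀] be a continuously differentiable bijection with φ′(s) > 0 for all s, and define τ : (R₁, r₀] → ℝ by τ(φ(s)) := τ̊(s)/φ′(s). If τ is bounded on (R₁, r₀], then R₁ = −∞. -/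
/-!
Regularity at the vertex gives `τ̊(s) ≥ (n−1)/(2s)` near `s = 0`, so a bound `|τ| ≤ M` forces
`φ′(s) = τ̊(s)/τ(φ(s)) ≥ (n−1)/(2Ms)`. Integrating, `φ(s) ≤ φ(s₁) + (n−1)/(2M) · log (s/s₁)`,
which tends to `−∞` as `s → 0⁺`; since `φ` takes its values above `R₁`, `R₁ = −∞`.
-/

open Set Filter Topology

lemma eventually_div_two_mul_le_of_abs_sub_div_le {g : ℝ → ℝ} {A C s₀ : ℝ} (hA : 0 < A)
    (hs₀ : 0 < s₀) (h : ∀ s ∈ Ioc 0 s₀, |g s - A / s| ≤ C * s) :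
    ∀ᶠ s in 𝓝[>] 0, A / (2 * s) ≤ g s := by
  have hsmall : ∀ᶠ s in 𝓝[>] (0 : ℝ), 2 * C * s ^ 2 < A := by
    have : Tendsto (fun s : ℝ => 2 * C * s ^ 2) (𝓝 0) (𝓝 0) :=
      (by fun_prop : Continuous fun s : ℝ => 2 * C * s ^ 2).tendsto' 0 0 (by simp)
    exact nhdsWithin_le_nhds (this.eventually (gt_mem_nhds hA))
  filter_upwards [Ioc_mem_nhdsGT hs₀, hsmall] with s hs hCs
  have hgap : A / s - C * s - A / (2 * s) = (A - 2 * C * s ^ 2) / (2 * s) := by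
    field_simp
    ring
  have : 0 ≤ A / s - C * s - A / (2 * s) := hgap ▸ div_nonneg (by linarith) (by linarith [hs.1])
  linarith [(abs_le.1 (h s hs)).1]

lemma mul_log_sub_le_sub_of_div_le_deriv {f f' : ℝ → ℝ} {k a b : ℝ} (ha : 0 < a) (hab : a ≤ b)
    (hf : ∀ x ∈ Icc a b, HasDerivAt f (f' x) x) (hf' : ∀ x ∈ Icc a b, k / x ≤ f' x) :
    k * (Real.log b - Real.log a) ≤ f b - f a := by
  have hpos : ∀ x ∈ Icc a b, 0 < x := fun x hx => ha.trans_le hx.1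
  have hderiv : ∀ x ∈ Icc a b, HasDerivAt (fun y => f y - k * Real.log y) (f' x - k / x) x :=
    fun x hx => by
      rw [div_eq_mul_inv]
      exact (hf x hx).sub ((Real.hasDerivAt_log (hpos x hx).ne').const_mul k)
  have hmono : MonotoneOn (fun y => f y - k * Real.log y) (Icc a b) :=
    monotoneOn_of_hasDerivWithinAt_nonneg (convex_Icc a b)
      (fun x hx => (hderiv x hx).continuousAt.continuousWithinAt)
      (fun x hx => (hderiv x (interior_subset hx)).hasDerivWithinAt)
      (fun x hx => sub_nonneg.2 (hf' x (interior_subset hx)))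
  linarith [hmono ⟨le_rfl, hab⟩ ⟨hab, le_rfl⟩ hab]

lemma tendsto_atBot_of_div_le_deriv {f f' : ℝ → ℝ} {k : ℝ} (hk : 0 < k)
    (hf : ∀ᶠ x in 𝓝[>] 0, HasDerivAt f (f' x) x) (hf' : ∀ᶠ x in 𝓝[>] 0, k / x ≤ f' x) :
    Tendsto f (𝓝[>] 0) atBot := by
  obtain ⟨b, hb, hsub⟩ := mem_nhdsGT_iff_exists_Ioc_subset.1 (hf.and hf')
  have hlog : Tendsto (fun x => f b - k * Real.log b + k * Real.log x) (𝓝[>] 0) atBot :=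
    tendsto_atBot_add_const_left _ _ (Real.tendsto_log_nhdsGT_zero.const_mul_atBot hk)
  refine tendsto_atBot_mono' _ ?_ hlog
  filter_upwards [Ioc_mem_nhdsGT hb] with a ha
  have hIcc : Icc a b ⊆ Ioc 0 b := fun x hx => ⟨ha.1.trans_le hx.1, hx.2⟩
  have := mul_log_sub_le_sub_of_div_le_deriv ha.1 ha.2 (fun x hx => (hsub (hIcc hx)).1)
    (fun x hx => (hsub (hIcc hx)).2)
  linarith

lemma EReal.eq_bot_of_lt_of_tendsto_atBot {α : Type*} {l : Filter α} [l.NeBot] {f : α → ℝ}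
    (hf : Tendsto f l atBot) {R : EReal} (hR : ∀ᶠ x in l, R < f x) : R = ⊥ := by
  refine (EReal.eq_bot_iff_forall_lt R).2 fun y => ?_
  obtain ⟨x, hRx, hxy⟩ := (hR.and (hf.eventually (eventually_lt_atBot y))).exists
  exact hRx.trans (EReal.coe_lt_coe_iff.2 hxy)

theorem bounded_expansion_forces_vertex_at_infinity_general (n : ℕ) (hn : 2 ≤ n)
    (s₀ C : ℝ) (hs₀ : 0 < s₀)
    (τO : ℝ → ℝ)
    (hτOb : ∀ s ∈ Ioc 0 s₀, |τO s - ((n:ℝ)-1)/s| ≤ C * s)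
    (R₁ : EReal) (r₀ : ℝ)
    (J : Set ℝ) (hJ : J = {x : ℝ | R₁ < (x : EReal) ∧ x ≤ r₀})
    (φ φ' : ℝ → ℝ)
    (hbij : Set.BijOn φ (Ioc 0 s₀) J)
    (hφ' : ∀ s ∈ Ioc 0 s₀, HasDerivWithinAt φ (φ' s) (Ioc 0 s₀) s)
    (hφ'pos : ∀ s ∈ Ioc 0 s₀, 0 < φ' s)
    (τ : ℝ → ℝ) (hτ : ∀ s ∈ Ioc 0 s₀, τ (φ s) = τO s / φ' s)
    (hbound : ∃ M, ∀ x ∈ J, |τ x| ≤ M) :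
    R₁ = ⊥ := by
  obtain ⟨M, hM⟩ := hbound
  obtain ⟨M, hMpos, hM⟩ : ∃ M > 0, ∀ x ∈ J, |τ x| ≤ M :=
    ⟨max M 1, by positivity, fun x hx => (hM x hx).trans (le_max_left _ _)⟩
  have hn₁ : (0 : ℝ) < n - 1 := by
    have : (2 : ℝ) ≤ n := by exact_mod_cast hn
    linarith
  have hs : ∀ᶠ s in 𝓝[>] (0 : ℝ), s ∈ Ioo 0 s₀ := Ioo_mem_nhdsGT hs₀
  have hφ'_ge : ∀ᶠ s in 𝓝[>] (0 : ℝ), (n - 1) / (2 * M) / s ≤ φ' s := by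
    filter_upwards [hs, eventually_div_two_mul_le_of_abs_sub_div_le hn₁ hs₀ hτOb]
      with s hs hτs
    have hs' := Ioo_subset_Ioc_self hs
    have hτM : τO s / φ' s ≤ M := hτ s hs' ▸ (le_abs_self _).trans (hM _ (hbij.mapsTo hs'))
    rw [div_le_iff₀ (hφ'pos s hs')] at hτM
    rw [div_le_iff₀ (by linarith [hs.1])] at hτs
    rw [div_div, div_le_iff₀ (mul_pos (by positivity) hs.1)]
    nlinarith [hs.1]
  have hφ_deriv : ∀ᶠ s in 𝓝[>] (0 : ℝ), HasDerivAt φ (φ' s) s := by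
    filter_upwards [hs] with s hs
    exact (hφ' s (Ioo_subset_Ioc_self hs)).hasDerivAt (Ioc_mem_nhds hs.1 hs.2)
  refine EReal.eq_bot_of_lt_of_tendsto_atBot
    (tendsto_atBot_of_div_le_deriv (by positivity) hφ_deriv hφ'_ge) ?_
  filter_upwards [hs] with s hs
  have hφs := hbij.mapsTo (Ioo_subset_Ioc_self hs)
  rw [hJ] at hφs
  exact hφs.1

/-- Any parameterisation of a null generator (with vertex at affine parameter `s = 0`,
regular expansion `τ̊(s) = (n−1)/s + O(s)`) in which the transformed expansion
`τ(φ(s)) = τ̊(s)/φ′(s)` is bounded forces the vertex to lie at parameter value `−∞`. -/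
theorem bounded_expansion_forces_vertex_at_infinity (n : ℕ) (hn : 2 ≤ n)
    (s₀ C : ℝ) (hs₀ : 0 < s₀) (hC : 0 ≤ C)
    (τO : ℝ → ℝ) (hτOc : ContinuousOn τO (Ioc 0 s₀))
    (hτOb : ∀ s ∈ Ioc 0 s₀, |τO s - ((n:ℝ)-1)/s| ≤ C * s)
    (R₁ : EReal) (r₀ : ℝ) (hR₁ : R₁ < (r₀ : EReal))
    (J : Set ℝ) (hJ : J = {x : ℝ | R₁ < (x : EReal) ∧ x ≤ r₀})
    (φ φ' : ℝ → ℝ)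
    (hbij : Set.BijOn φ (Ioc 0 s₀) J)
    (hφ' : ∀ s ∈ Ioc 0 s₀, HasDerivWithinAt φ (φ' s) (Ioc 0 s₀) s)
    (hφ'c : ContinuousOn φ' (Ioc 0 s₀))
    (hφ'pos : ∀ s ∈ Ioc 0 s₀, 0 < φ' s)
    (τ : ℝ → ℝ) (hτ : ∀ s ∈ Ioc 0 s₀, τ (φ s) = τO s / φ' s)
    (hbound : ∃ M, ∀ x ∈ J, |τ x| ≤ M) :
    R₁ = ⊥ :=
  bounded_expansion_forces_vertex_at_infinity_general n hn s₀ C hs₀ τO hτOb R₁ r₀ J hJ φ φ' hbij hφ'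
    hφ'pos τ hτ hbound
end

section
/- Let n ≥ 2, let S be a constant symmetric positive-definite (n−1)×(n−1) real matrix, let ε > 0, C ≥ 0, and let γ : (0, ε) → (symmetric (n−1)×(n−1) real matrices) be differentiable with ‖γ(r) − r²·S‖ ≤ C·r⁴ and ‖γ′(r) − 2r·S‖ ≤ C·r³ for all r ∈ (0, ε). Then there exist ε′ ∈ (0, ε] and C′ ≥ 0 such that for all r ∈ (0, ε′) the matrix γ(r) is invertible and the expansion τ(r) := (1/2)·tr(γ(r)⁻¹·γ′(r)) satisfies |τ(r) − (n−1)/r| ≤ C′·r. -/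
/-! Put `M(r) = r⁻² γ(r)`. The hypotheses give `M(r) → S`, so for small `r` the matrix `γ(r)` is
invertible and `r² γ(r)⁻¹ = M(r)⁻¹ → S⁻¹` stays bounded. Since `½ tr(γ⁻¹ (2/r) γ) = (n-1)/r`,
the error is `τ(r) - (n-1)/r = ½ tr(γ(r)⁻¹ (γ'(r) - (2/r) γ(r)))`, and
`γ' - (2/r) γ = (γ' - 2r S) - (2/r)(γ - r² S) = O(r³)`; multiplied by `γ⁻¹ = O(r⁻²)` this is
`O(r)`. -/

open Matrix Set Filter Topology Asymptotics

-- Any norm would do; the ℓ∞-operator norm is submultiplicative, as `IsBigO.mul` requires.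
attribute [local instance] Matrix.linftyOpNormedAddCommGroup Matrix.linftyOpNormedSpace
  Matrix.linftyOpNormedRing Matrix.linftyOpNormedAlgebra

theorem isBigO_inv_pow_smul {E : Type*} [NormedAddCommGroup E] [NormedSpace ℝ E] {G : ℝ → E}
    {j k : ℕ} (hG : G =O[𝓝[>] 0] fun r => r ^ (j + k)) :
    (fun r => (r ^ j)⁻¹ • G r) =O[𝓝[>] 0] fun r => r ^ k := by
  refine ((isBigO_refl (fun r : ℝ => (r ^ j)⁻¹) _).smul hG).congr' .rfl ?_
  filter_upwards [self_mem_nhdsWithin] with r (hr : 0 < r)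
  rw [smul_eq_mul, pow_add, inv_mul_cancel_left₀ (pow_ne_zero _ hr.ne')]

namespace Matrix

variable {m n : Type*} [Fintype m] [Fintype n]

theorem isBigO_of_forall_entry [DecidableEq m] [DecidableEq n] {α : Type*} {l : Filter α}
    {f : α → Matrix m n ℝ} {g : α → ℝ}
    (h : ∀ i j, (fun x => f x i j) =O[l] g) : f =O[l] g := by
  have hf : f = fun x => ∑ i, ∑ j, f x i j • single i j (1 : ℝ) := by
    funext x
    conv_lhs => rw [matrix_eq_sum_single (f x)]
    simp only [smul_single, smul_eq_mul, mul_one]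
  rw [hf]
  refine IsBigO.fun_sum fun i _ => IsBigO.fun_sum fun j _ => ?_
  exact ((h i j).smul (isBigO_const_const (single i j (1 : ℝ)) (one_ne_zero (α := ℝ)) l))
    |>.congr_right fun x => mul_one _

theorem isBigO_pow_of_abs_entry_le [DecidableEq m] [DecidableEq n] {f : ℝ → Matrix m n ℝ}
    {ε C : ℝ} {k : ℕ} (hε : 0 < ε) (h : ∀ r ∈ Ioo 0 ε, ∀ i j, |f r i j| ≤ C * r ^ k) :
    f =O[𝓝[>] 0] fun r => r ^ k :=
  isBigO_of_forall_entry fun i j => IsBigO.of_bound C <| by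
    filter_upwards [Ioo_mem_nhdsGT hε] with r hr
    rw [Real.norm_eq_abs, Real.norm_eq_abs, abs_of_nonneg (pow_nonneg hr.1.le k)]
    exact h r hr i j

variable [DecidableEq n]

theorem trace_inv_mul_sub_smul_self {A : Matrix n n ℝ} (hA : IsUnit A.det) (B : Matrix n n ℝ)
    (c : ℝ) : (A⁻¹ * (B - c • A)).trace = (A⁻¹ * B).trace - c * Fintype.card n := by
  rw [Matrix.mul_sub, Matrix.mul_smul, nonsing_inv_mul A hA, trace_sub, trace_smul, trace_one,
    smul_eq_mul]

theorem isBigO_trace {α : Type*} {l : Filter α} {f : α → Matrix n n ℝ} {g : α → ℝ}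
    (h : f =O[l] g) : (fun x => (f x).trace) =O[l] g :=
  ((traceLinearMap n ℝ ℝ).toContinuousLinearMap.isBigO_comp f l).trans h

end Matrix

section Expansion

variable {ι : Type*} [Fintype ι] [DecidableEq ι] {S : Matrix ι ι ℝ} {γ γ' : ℝ → Matrix ι ι ℝ}

noncomputable def expansion (γ γ' : ℝ → Matrix ι ι ℝ) (r : ℝ) : ℝ :=
  (1 / 2) * ((γ r)⁻¹ * γ' r).trace

theorem tendsto_inv_sq_smul_of_isBigO
    (hγ : (fun r => γ r - r ^ 2 • S) =O[𝓝[>] 0] fun r => r ^ 4) :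
    Tendsto (fun r => (r ^ 2)⁻¹ • γ r) (𝓝[>] 0) (𝓝 S) := by
  rw [← tendsto_sub_nhds_zero_iff]
  refine ((isBigO_inv_pow_smul (j := 2) (k := 2) hγ).trans_tendsto
    (((continuous_pow 2).tendsto' 0 0 (zero_pow two_ne_zero)).mono_left
      nhdsWithin_le_nhds)).congr' ?_
  filter_upwards [self_mem_nhdsWithin] with r (hr : 0 < r)
  rw [smul_sub, smul_smul, inv_mul_cancel₀ (pow_ne_zero 2 hr.ne'), one_smul]

theorem eventually_isUnit_of_isBigO (hS : IsUnit S)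
    (hγ : (fun r => γ r - r ^ 2 • S) =O[𝓝[>] 0] fun r => r ^ 4) :
    ∀ᶠ r in 𝓝[>] 0, IsUnit (γ r) := by
  filter_upwards [(tendsto_inv_sq_smul_of_isBigO hγ).eventually (Units.isOpen.mem_nhds hS),
    self_mem_nhdsWithin] with r hM (hr : 0 < r)
  have hr2 : (r ^ 2)⁻¹ ≠ 0 := by positivity
  rwa [← Units.val_mk0 hr2, ← Units.smul_def, isUnit_smul_iff] at hM

theorem tendsto_sq_smul_inv_of_isBigO (hS : IsUnit S)
    (hγ : (fun r => γ r - r ^ 2 • S) =O[𝓝[>] 0] fun r => r ^ 4) :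
    Tendsto (fun r => r ^ 2 • (γ r)⁻¹) (𝓝[>] 0) (𝓝 S⁻¹) := by
  have hinv := (NormedRing.inverse_continuousAt hS.unit).tendsto.comp
    (tendsto_inv_sq_smul_of_isBigO hγ)
  simp only [Function.comp_def, IsUnit.unit_spec, ← nonsing_inv_eq_ringInverse] at hinv
  refine hinv.congr' ?_
  filter_upwards [eventually_isUnit_of_isBigO hS hγ, self_mem_nhdsWithin] with r hγr (hr : 0 < r)
  have hr2 : (r ^ 2)⁻¹ ≠ 0 := by positivity
  rw [← Units.val_mk0 hr2, ← Units.smul_def,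
    inv_smul' _ _ ((isUnit_iff_isUnit_det _).mp hγr), Units.smul_def, Units.val_inv_eq_inv_val,
    Units.val_mk0, inv_inv]

theorem isBigO_sub_two_div_smul (hγ : (fun r => γ r - r ^ 2 • S) =O[𝓝[>] 0] fun r => r ^ 4)
    (hγ' : (fun r => γ' r - (2 * r) • S) =O[𝓝[>] 0] fun r => r ^ 3) :
    (fun r => γ' r - (2 / r) • γ r) =O[𝓝[>] 0] fun r => r ^ 3 := by
  refine (hγ'.sub ((isBigO_inv_pow_smul (j := 1) (k := 3) hγ).const_smul_left (2 : ℝ))).congr' ?_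
    .rfl
  filter_upwards [self_mem_nhdsWithin] with r (hr : 0 < r)
  have hr0 : r ≠ 0 := hr.ne'
  simp only [Pi.smul_apply, smul_sub, smul_smul, pow_one]
  rw [show 2 * (r⁻¹ * r ^ 2) = 2 * r by field_simp, show 2 * r⁻¹ = 2 / r by ring]
  abel

theorem isBigO_expansion_sub (hS : IsUnit S)
    (hγ : (fun r => γ r - r ^ 2 • S) =O[𝓝[>] 0] fun r => r ^ 4)
    (hγ' : (fun r => γ' r - (2 * r) • S) =O[𝓝[>] 0] fun r => r ^ 3) :
    (fun r => expansion γ γ' r - Fintype.card ι / r) =O[𝓝[>] 0] fun r => r := by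
  have hprod : (fun r => (r ^ 2 • (γ r)⁻¹) * ((r ^ 2)⁻¹ • (γ' r - (2 / r) • γ r)))
      =O[𝓝[>] 0] fun r => (1 : ℝ) * r ^ 1 :=
    ((tendsto_sq_smul_inv_of_isBigO hS hγ).isBigO_one ℝ).mul
      (isBigO_inv_pow_smul (isBigO_sub_two_div_smul hγ hγ'))
  refine ((isBigO_trace hprod).const_mul_left (1 / 2)).congr' ?_ (.of_forall fun r => by simp)
  filter_upwards [eventually_isUnit_of_isBigO hS hγ, self_mem_nhdsWithin] with r hγr (hr : 0 < r)
  rw [smul_mul_smul_comm, mul_inv_cancel₀ (pow_ne_zero 2 hr.ne'), one_smul,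
    trace_inv_mul_sub_smul_self ((isUnit_iff_isUnit_det _).mp hγr), expansion]
  field_simp

end Expansion

theorem expansion_near_vertex_general (n : ℕ) (hn : 2 ≤ n)
    (S : Matrix (Fin (n-1)) (Fin (n-1)) ℝ) (hS : S.PosDef)
    (ε C : ℝ) (hε : 0 < ε)
    (γ γ' : ℝ → Matrix (Fin (n-1)) (Fin (n-1)) ℝ)
    (hb : ∀ r ∈ Ioo 0 ε, ∀ i j, |γ r i j - r^2 * S i j| ≤ C * r^4)
    (hb' : ∀ r ∈ Ioo 0 ε, ∀ i j, |γ' r i j - 2 * r * S i j| ≤ C * r^3) :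
    ∃ ε' C' : ℝ, 0 < ε' ∧ ε' ≤ ε ∧ 0 ≤ C' ∧
      ∀ r ∈ Ioo 0 ε', IsUnit (γ r) ∧
        |(1/2 : ℝ) * ((γ r)⁻¹ * γ' r).trace - ((n:ℝ)-1)/r| ≤ C' * r := by
  have hγ : (fun r => γ r - r ^ 2 • S) =O[𝓝[>] 0] fun r => r ^ 4 :=
    isBigO_pow_of_abs_entry_le hε fun r hr i j => by simpa using hb r hr i j
  have hγ' : (fun r => γ' r - (2 * r) • S) =O[𝓝[>] 0] fun r => r ^ 3 :=
    isBigO_pow_of_abs_entry_le hε fun r hr i j => by simpa [mul_assoc] using hb' r hr i j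
  obtain ⟨C', hC', hbound⟩ := (isBigO_expansion_sub hS.isUnit hγ hγ').exists_nonneg
  obtain ⟨δ, hδ, hsub⟩ := mem_nhdsGT_iff_exists_Ioo_subset.mp
    ((eventually_isUnit_of_isBigO hS.isUnit hγ).and hbound.bound)
  refine ⟨min δ ε, C', lt_min hδ hε, min_le_right _ _, hC', fun r hr => ?_⟩
  obtain ⟨hunit, hr_bound⟩ := hsub ⟨hr.1, hr.2.trans_le (min_le_left _ _)⟩
  have hcard : ((n - 1 : ℕ) : ℝ) = n - 1 := by
    rw [Nat.cast_sub (by omega), Nat.cast_one]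
  refine ⟨hunit, ?_⟩
  simpa [expansion, hcard, abs_of_pos hr.1] using hr_bound

/-- For light-cone data `γ(r) = r²·S + O₁(r⁴)` near the vertex, the matrices `γ(r)` are
invertible for small `r` and the expansion `τ = ½ tr(γ⁻¹γ′)` satisfies
`τ(r) = (n−1)/r + O(r)`. -/
theorem expansion_near_vertex (n : ℕ) (hn : 2 ≤ n)
    (S : Matrix (Fin (n-1)) (Fin (n-1)) ℝ) (hS : S.PosDef)
    (ε C : ℝ) (hε : 0 < ε) (hC : 0 ≤ C)
    (γ γ' : ℝ → Matrix (Fin (n-1)) (Fin (n-1)) ℝ)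
    (hsymm : ∀ r ∈ Ioo 0 ε, (γ r).IsSymm)
    (hderiv : ∀ r ∈ Ioo 0 ε, ∀ i j, HasDerivAt (fun s => γ s i j) (γ' r i j) r)
    (hb : ∀ r ∈ Ioo 0 ε, ∀ i j, |γ r i j - r^2 * S i j| ≤ C * r^4)
    (hb' : ∀ r ∈ Ioo 0 ε, ∀ i j, |γ' r i j - 2 * r * S i j| ≤ C * r^3) :
    ∃ ε' C' : ℝ, 0 < ε' ∧ ε' ≤ ε ∧ 0 ≤ C' ∧
      ∀ r ∈ Ioo 0 ε', IsUnit (γ r) ∧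
        |(1/2 : ℝ) * ((γ r)⁻¹ * γ' r).trace - ((n:ℝ)-1)/r| ≤ C' * r :=
  expansion_near_vertex_general n hn S hS ε C hε γ γ' hb hb'
end

section
/- Let n ≥ 2, let S be a constant symmetric positive-definite (n−1)×(n−1) real matrix, let R ∈ ℝ, C ≥ 0, and let k : (−∞, R] → (symmetric (n−1)×(n−1) real matrices) be differentiable with ‖k(r)‖ ≤ C·e^{4r} and ‖k′(r)‖ ≤ C·e^{4r} for all r ≤ R. Set γ(r) := e^{2r}·S + k(r). Then there exist R′ ≤ R and C′ ≥ 0 such that for all r ≤ R′ the matrix γ(r) is invertible and, with χ(r) := (1/2)·γ(r)⁻¹·γ′(r) and σ(r) := χ(r) − (tr χ(r)/(n−1))·Id, one has tr(σ(r)²) ≤ C′·e^{2r}. -/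
/-!
Writing `γ(r) = e^{2r} (S + e^{-2r} k(r))` with `e^{-2r} k(r) = O(e^{2r}) → 0` shows that `γ(r)` is
invertible near the vertex with `γ(r)⁻¹ = O(e^{-2r})`. Since `χ - Id = ½ γ⁻¹ (γ' - 2γ) = ½ γ⁻¹ (k' - 2k)`
and `k, k' = O(e^{4r})`, we get `χ = Id + O(e^{2r})`. The shear is the trace-free part of `χ`, which
annihilates `Id`, so `σ = O(e^{2r})` and `tr σ² = O(e^{4r})`.
-/

open Matrix Set Filter Asymptotics Topology

-- In finite dimension any norm would do; the `L∞` operator norm makes matrices a normed ring.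
attribute [local instance] Matrix.linftyOpNormedAddCommGroup Matrix.linftyOpNormedSpace
  Matrix.linftyOpNormedRing Matrix.linftyOpNormedAlgebra

namespace Matrix

lemma linfty_opNorm_le_card_mul {m n α : Type*} [Fintype m] [Fintype n] [NormedAddCommGroup α]
    {M : Matrix m n α} {c : ℝ} (hc : 0 ≤ c) (h : ∀ i j, ‖M i j‖ ≤ c) :
    ‖M‖ ≤ Fintype.card n * c := by
  lift c to NNReal using hc
  change (‖M‖₊ : ℝ) ≤ _
  rw [linfty_opNNNorm_def]
  norm_cast
  refine Finset.sup_le fun i _ => ?_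
  simpa using Finset.sum_le_card_nsmul Finset.univ _ c fun j _ => (h i j : ‖M i j‖₊ ≤ c)

lemma isBigO_of_forall_norm_apply_le {α m n E : Type*} [Fintype m] [Fintype n]
    [NormedAddCommGroup E] {l : Filter α} {f : α → Matrix m n E} {g : α → ℝ}
    (h : ∀ᶠ x in l, ∀ i j, ‖f x i j‖ ≤ g x) : f =O[l] g :=
  .of_bound (Fintype.card n) <| h.mono fun _ hx =>
    linfty_opNorm_le_card_mul (norm_nonneg _) fun i j => (hx i j).trans (Real.le_norm_self _)

variable {ι R : Type*} [Fintype ι] [DecidableEq ι] [Field R]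

variable (R) in
def tracelessPart : Matrix ι ι R →ₗ[R] Matrix ι ι R :=
  LinearMap.id - (Fintype.card ι : R)⁻¹ • (traceLinearMap ι R R).smulRight 1

lemma tracelessPart_apply (M : Matrix ι ι R) :
    tracelessPart R M = M - (M.trace / Fintype.card ι) • 1 := by
  simp [tracelessPart, div_eq_inv_mul, smul_smul]

lemma tracelessPart_one [CharZero R] : tracelessPart R (1 : Matrix ι ι R) = 0 := by
  cases isEmpty_or_nonempty ι
  · exact Subsingleton.elim _ _
  · simp [tracelessPart_apply]

end Matrix

lemma LinearMap.isBigO_comp_of_finiteDimensional {α E F : Type*} [NormedAddCommGroup E]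
    [NormedSpace ℝ E] [FiniteDimensional ℝ E] [NormedAddCommGroup F] [NormedSpace ℝ F]
    (f : E →ₗ[ℝ] F) (g : α → E) (l : Filter α) : (fun x => f (g x)) =O[l] g :=
  (LinearMap.toContinuousLinearMap f).isBigO_comp g l

lemma isLittleO_exp_mul_atBot {a b : ℝ} (h : b < a) :
    (fun r => Real.exp (a * r)) =o[atBot] fun r => Real.exp (b * r) := by
  refine Real.isLittleO_exp_comp_exp_comp.mpr ?_
  simpa [← sub_mul] using tendsto_id.const_mul_atBot_of_neg (sub_neg.mpr h)

section

variable {α ι : Type*} [Fintype ι] [DecidableEq ι] {l : Filter α}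

lemma eventually_isUnit_and_isBigO_inv_of_isLittleO {S : Matrix ι ι ℝ} (hS : IsUnit S)
    {c : α → ℝ} (hc : ∀ x, c x ≠ 0) {k : α → Matrix ι ι ℝ} (hk : k =o[l] c) :
    (∀ᶠ x in l, IsUnit (c x • S + k x)) ∧
      (fun x => (c x • S + k x)⁻¹) =O[l] fun x => (c x)⁻¹ := by
  set A := fun x => S + (c x)⁻¹ • k x
  have hscale : ∀ x, c x • S + k x = c x • A x := fun x => by
    simp [A, smul_add, smul_smul, hc x]
  have hA : Tendsto A l (𝓝 S) := by
    have := (tendsto_const_nhds (x := S)).add hk.tendsto_inv_smul_nhds_zero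
    rwa [add_zero] at this
  have hAunit : ∀ᶠ x in l, IsUnit (A x) := hA.eventually (Units.isOpen.mem_nhds hS)
  have hAinv : Tendsto (fun x => (A x)⁻¹) l (𝓝 S⁻¹) :=
    (continuousAt_matrix_inv S (NormedRing.inverse_continuousAt
      ((isUnit_iff_isUnit_det S).mp hS).unit)).tendsto.comp hA
  refine ⟨hAunit.mono fun x hx => hscale x ▸ hx.smul (Units.mk0 (c x) (hc x)), ?_⟩
  refine ((isBigO_refl (fun x => (c x)⁻¹) l).smul (hAinv.isBigO_one ℝ)).congr' ?_ (by simp)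
  filter_upwards [hAunit] with x hx
  rw [hscale]
  exact (inv_smul' _ (Units.mk0 (c x) (hc x)) ((isUnit_iff_isUnit_det _).mp hx)).symm

lemma half_smul_inv_mul_sub_one {γ γ' : Matrix ι ι ℝ} (hγ : IsUnit γ) :
    (1/2 : ℝ) • (γ⁻¹ * γ') - 1 = (1/2 : ℝ) • (γ⁻¹ * (γ' - (2 : ℝ) • γ)) := by
  rw [mul_sub, Matrix.mul_smul, nonsing_inv_mul _ ((isUnit_iff_isUnit_det _).mp hγ)]
  module

lemma isBigO_trace_mul_self_tracelessPart {χ : α → Matrix ι ι ℝ} {g : α → ℝ}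
    (h : (fun x => χ x - 1) =O[l] g) :
    (fun x => (tracelessPart ℝ (χ x) * tracelessPart ℝ (χ x)).trace) =O[l] fun x => g x * g x := by
  have hσ : (fun x => tracelessPart ℝ (χ x)) =O[l] g :=
    ((tracelessPart ℝ).isBigO_comp_of_finiteDimensional (fun x => χ x - 1) l |>.trans h).congr_left
      fun x => by rw [map_sub, tracelessPart_one, sub_zero]
  exact ((traceLinearMap ι ℝ ℝ).isBigO_comp_of_finiteDimensional _ l).trans (hσ.mul hσ)

end

lemma isBigO_half_inv_mul_sub_one {ι : Type*} [Fintype ι] [DecidableEq ι]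
    {S : Matrix ι ι ℝ} (hS : IsUnit S) {k k' γ γ' : ℝ → Matrix ι ι ℝ}
    (hk : k =O[atBot] fun r => Real.exp (4 * r)) (hk' : k' =O[atBot] fun r => Real.exp (4 * r))
    (hγ : ∀ r, γ r = Real.exp (2 * r) • S + k r)
    (hγ' : ∀ r, γ' r = (2 * Real.exp (2 * r)) • S + k' r) :
    (∀ᶠ r in atBot, IsUnit (γ r)) ∧
      (fun r => (1/2 : ℝ) • ((γ r)⁻¹ * γ' r) - 1) =O[atBot] fun r => Real.exp (2 * r) := by
  obtain ⟨hunit, hinv⟩ := eventually_isUnit_and_isBigO_inv_of_isLittleO hS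
    (fun r => (Real.exp_pos (2 * r)).ne') (hk.trans_isLittleO (isLittleO_exp_mul_atBot (by norm_num)))
  simp only [← hγ] at hunit hinv
  refine ⟨hunit, ?_⟩
  have hdiff : (fun r => γ' r - (2 : ℝ) • γ r) =O[atBot] fun r => Real.exp (4 * r) := by
    refine (hk'.sub (hk.const_smul_left (2 : ℝ))).congr_left fun r => ?_
    rw [Pi.smul_apply, hγ, hγ']
    module
  refine ((hinv.mul hdiff).const_smul_left (1/2 : ℝ)).congr' ?_ (.of_eq ?_)
  · filter_upwards [hunit] with r hr using (half_smul_inv_mul_sub_one hr).symm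
  · ext1 r
    rw [← Real.exp_neg, ← Real.exp_add]
    ring_nf

theorem shear_decay_in_Hayward_gauge_general (n : ℕ) (hn : 2 ≤ n)
    (S : Matrix (Fin (n-1)) (Fin (n-1)) ℝ) (hS : S.PosDef)
    (R C : ℝ)
    (k k' : ℝ → Matrix (Fin (n-1)) (Fin (n-1)) ℝ)
    (hkb : ∀ r ∈ Iic R, ∀ i j, |k r i j| ≤ C * Real.exp (4*r))
    (hkb' : ∀ r ∈ Iic R, ∀ i j, |k' r i j| ≤ C * Real.exp (4*r))
    (γ γ' : ℝ → Matrix (Fin (n-1)) (Fin (n-1)) ℝ)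
    (hγ : ∀ r, γ r = Real.exp (2*r) • S + k r)
    (hγ' : ∀ r, γ' r = (2 * Real.exp (2*r)) • S + k' r)
    (χ : ℝ → Matrix (Fin (n-1)) (Fin (n-1)) ℝ)
    (hχ : ∀ r, χ r = (1/2 : ℝ) • ((γ r)⁻¹ * γ' r))
    (σ : ℝ → Matrix (Fin (n-1)) (Fin (n-1)) ℝ)
    (hσ : ∀ r, σ r = χ r - ((χ r).trace / ((n:ℝ)-1)) • 1) :
    ∃ R' C' : ℝ, R' ≤ R ∧ 0 ≤ C' ∧
      ∀ r ∈ Iic R', IsUnit (γ r) ∧ (σ r * σ r).trace ≤ C' * Real.exp (2*r) := by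
  have hdim : (n : ℝ) - 1 = Fintype.card (Fin (n-1)) := by
    simp [Nat.cast_sub (by omega : 1 ≤ n)]
  have hk := (isBigO_of_forall_norm_apply_le (f := k) (g := fun r => C * Real.exp (4 * r))
    (eventually_atBot.mpr ⟨R, hkb⟩)).trans (isBigO_const_mul_self C _ _)
  have hk' := (isBigO_of_forall_norm_apply_le (f := k') (g := fun r => C * Real.exp (4 * r))
    (eventually_atBot.mpr ⟨R, hkb'⟩)).trans (isBigO_const_mul_self C _ _)
  obtain ⟨hunit, hχ1⟩ := isBigO_half_inv_mul_sub_one hS.isUnit hk hk' hγ hγ'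
  simp only [← hχ] at hχ1
  have hσσ : (fun r => (σ r * σ r).trace) =O[atBot] fun r => Real.exp (2 * r) := by
    simp only [hσ, hdim, ← tracelessPart_apply]
    have hexp : ∀ r, Real.exp (2 * r) * Real.exp (2 * r) = Real.exp (4 * r) := fun r => by
      rw [← Real.exp_add]; ring_nf
    have h4 := isBigO_trace_mul_self_tracelessPart hχ1
    simp only [hexp] at h4
    exact h4.trans (isLittleO_exp_mul_atBot (by norm_num)).isBigO
  obtain ⟨C', hC', hbound⟩ := hσσ.exists_nonneg
  obtain ⟨R', hR'⟩ := eventually_atBot.mp (hunit.and hbound.bound)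
  refine ⟨min R' R, C', min_le_right _ _, hC', fun r hr => ?_⟩
  obtain ⟨hγr, hσr⟩ := hR' r (hr.out.trans (min_le_left _ _))
  refine ⟨hγr, (le_abs_self _).trans ?_⟩
  simpa [abs_of_pos (Real.exp_pos _)] using hσr

/-- For Hayward-gauge light-cone data `γ(r) = e^{2r}·S + O₁(e^{4r})` (vertex at `r = −∞`),
`γ(r)` is invertible for small `r` and the squared shear satisfies `tr(σ²) ≤ C′·e^{2r}`. -/
theorem shear_decay_in_Hayward_gauge (n : ℕ) (hn : 2 ≤ n)
    (S : Matrix (Fin (n-1)) (Fin (n-1)) ℝ) (hS : S.PosDef)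
    (R C : ℝ) (hC : 0 ≤ C)
    (k k' : ℝ → Matrix (Fin (n-1)) (Fin (n-1)) ℝ)
    (hksymm : ∀ r ∈ Iic R, (k r).IsSymm)
    (hkderiv : ∀ r ∈ Iic R, ∀ i j,
      HasDerivWithinAt (fun s => k s i j) (k' r i j) (Iic R) r)
    (hkb : ∀ r ∈ Iic R, ∀ i j, |k r i j| ≤ C * Real.exp (4*r))
    (hkb' : ∀ r ∈ Iic R, ∀ i j, |k' r i j| ≤ C * Real.exp (4*r))
    (γ γ' : ℝ → Matrix (Fin (n-1)) (Fin (n-1)) ℝ)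
    (hγ : ∀ r, γ r = Real.exp (2*r) • S + k r)
    (hγ' : ∀ r, γ' r = (2 * Real.exp (2*r)) • S + k' r)
    (χ : ℝ → Matrix (Fin (n-1)) (Fin (n-1)) ℝ)
    (hχ : ∀ r, χ r = (1/2 : ℝ) • ((γ r)⁻¹ * γ' r))
    (σ : ℝ → Matrix (Fin (n-1)) (Fin (n-1)) ℝ)
    (hσ : ∀ r, σ r = χ r - ((χ r).trace / ((n:ℝ)-1)) • 1) :
    ∃ R' C' : ℝ, R' ≤ R ∧ 0 ≤ C' ∧
      ∀ r ∈ Iic R', IsUnit (γ r) ∧ (σ r * σ r).trace ≤ C' * Real.exp (2*r) :=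
  shear_decay_in_Hayward_gauge_general n hn S hS R C k k' hkb hkb' γ γ' hγ hγ' χ hχ σ hσ
end

section
/- Let n ≥ 2, a > 0, C ≥ 0, and let p, F : (0, a] → ℝ be continuous with |p(r)| ≤ C and |F(r)| ≤ C·r for all r ∈ (0, a]. Set P(r) := ∫_{a}^{r} p(s) ds and define ξ(r) := (2·e^{−P(r)}/r^{n−1}) · ∫_{0}^{r} s^{n−1}·e^{P(s)}·F(s) ds. Then there exists C′ ≥ 0 such that |ξ(r)| ≤ C′·r² for all r ∈ (0, a]. -/
open Set

/-!
Since `|p| ≤ C`, the primitive satisfies `|P| ≤ C a` on `(0, a]`, so both exponential factors are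
bounded by `E = exp (C a)`. The integrand is then at most `E C r · s^(n-1)` on `(0, r]`, the integral
at most `E C r · r^n`, and dividing by `r^(n-1)` leaves `2 C E² r²`.
-/

variable {V : Type*} [NormedAddCommGroup V] [NormedSpace ℝ V]

theorem norm_intervalIntegral_le_of_mem_Ioc {p : ℝ → V} {a C s : ℝ} (hC : 0 ≤ C)
    (hp : ∀ x ∈ Ioc 0 a, ‖p x‖ ≤ C) (hs : s ∈ Ioc 0 a) :
    ‖∫ x in a..s, p x‖ ≤ C * a := by
  have hbound : ∀ x ∈ uIoc a s, ‖p x‖ ≤ C := fun x hx => by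
    rw [uIoc_of_ge hs.2] at hx
    exact hp x (Ioc_subset_Ioc_left hs.1.le hx)
  calc ‖∫ x in a..s, p x‖ ≤ C * |s - a| := intervalIntegral.norm_integral_le_of_norm_le_const hbound
    _ ≤ C * a := by
        rw [abs_of_nonpos (sub_nonpos.2 hs.2)]
        nlinarith [hs.1]

theorem norm_intervalIntegral_le_of_norm_le_mul_pow {f : ℝ → V} {r M : ℝ} {k : ℕ} (hr : 0 < r)
    (hf : ∀ s ∈ Ioc 0 r, ‖f s‖ ≤ M * s ^ k) :
    ‖∫ s in (0:ℝ)..r, f s‖ ≤ M * r ^ (k + 1) := by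
  have hM : 0 ≤ M := nonneg_of_mul_nonneg_left ((norm_nonneg _).trans (hf r ⟨hr, le_rfl⟩))
    (by positivity)
  have hbound : ∀ s ∈ uIoc 0 r, ‖f s‖ ≤ M * r ^ k := fun s hs => by
    rw [uIoc_of_le hr.le] at hs
    exact (hf s hs).trans (mul_le_mul_of_nonneg_left (pow_le_pow_left₀ hs.1.le hs.2 k) hM)
  calc ‖∫ s in (0:ℝ)..r, f s‖ ≤ M * r ^ k * |r - 0| :=
        intervalIntegral.norm_integral_le_of_norm_le_const hbound
    _ = M * r ^ (k + 1) := by rw [sub_zero, abs_of_pos hr, pow_succ, mul_assoc]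

theorem xi_vanishes_quadratically_at_vertex_general (n : ℕ)
    (a C : ℝ) (hC : 0 ≤ C)
    (p F : ℝ → ℝ)
    (hpb : ∀ r ∈ Ioc 0 a, |p r| ≤ C)
    (hFb : ∀ r ∈ Ioc 0 a, |F r| ≤ C * r)
    (P : ℝ → ℝ) (hP : ∀ r, P r = ∫ s in a..r, p s)
    (ξ : ℝ → ℝ)
    (hξ : ∀ r, ξ r = (2 * Real.exp (-(P r)) / r^(n-1)) *
      ∫ s in (0:ℝ)..r, s^(n-1) * Real.exp (P s) * F s) :
    ∃ C' : ℝ, 0 ≤ C' ∧ ∀ r ∈ Ioc 0 a, |ξ r| ≤ C' * r^2 := by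
  set E := Real.exp (C * a)
  have hPE : ∀ s ∈ Ioc 0 a, Real.exp |P s| ≤ E := fun s hs =>
    Real.exp_le_exp.2 <| by
      rw [hP, ← Real.norm_eq_abs]
      exact norm_intervalIntegral_le_of_mem_Ioc hC hpb hs
  refine ⟨2 * C * E * E, by positivity, fun r hr => ?_⟩
  have hintegral : |∫ s in (0:ℝ)..r, s ^ (n - 1) * Real.exp (P s) * F s|
      ≤ E * (C * r) * r ^ (n - 1 + 1) := by
    refine norm_intervalIntegral_le_of_norm_le_mul_pow (V := ℝ) hr.1 fun s hs => ?_
    have hsa : s ∈ Ioc 0 a := ⟨hs.1, hs.2.trans hr.2⟩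
    have hexp : Real.exp (P s) ≤ E := (Real.exp_le_exp.2 (le_abs_self _)).trans (hPE s hsa)
    have hF : |F s| ≤ C * r := (hFb s hsa).trans (by gcongr; exact hs.2)
    calc |s ^ (n - 1) * Real.exp (P s) * F s| = Real.exp (P s) * |F s| * s ^ (n - 1) := by
          rw [abs_mul, abs_mul, abs_of_nonneg (pow_nonneg hs.1.le _), Real.abs_exp]; ring
      _ ≤ E * (C * r) * s ^ (n - 1) :=
          mul_le_mul_of_nonneg_right (mul_le_mul hexp hF (abs_nonneg _) (Real.exp_pos _).le)
            (pow_nonneg hs.1.le _)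
  have hexp : Real.exp (-P r) ≤ E := (Real.exp_le_exp.2 (neg_le_abs _)).trans (hPE r hr)
  have hr0 : 0 < r := hr.1
  rw [hξ, abs_mul, abs_of_nonneg (by positivity)]
  calc 2 * Real.exp (-P r) / r ^ (n - 1) * |∫ s in (0:ℝ)..r, s ^ (n - 1) * Real.exp (P s) * F s|
      ≤ 2 * E / r ^ (n - 1) * (E * (C * r) * r ^ (n - 1 + 1)) := by gcongr
    _ = 2 * C * E * E * r ^ 2 := by field_simp; ring

/-- With `|p| ≤ C` and `|F(r)| ≤ C·r`, the explicit solution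
`ξ(r) = (2e^{−P(r)}/r^{n−1})·∫_0^r s^{n−1}e^{P(s)}F(s) ds` of the `ξ`-constraint
satisfies `|ξ(r)| ≤ C′·r²` on `(0,a]`. -/
theorem xi_vanishes_quadratically_at_vertex (n : ℕ) (hn : 2 ≤ n)
    (a C : ℝ) (ha : 0 < a) (hC : 0 ≤ C)
    (p F : ℝ → ℝ)
    (hpc : ContinuousOn p (Ioc 0 a)) (hFc : ContinuousOn F (Ioc 0 a))
    (hpb : ∀ r ∈ Ioc 0 a, |p r| ≤ C)
    (hFb : ∀ r ∈ Ioc 0 a, |F r| ≤ C * r)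
    (P : ℝ → ℝ) (hP : ∀ r, P r = ∫ s in a..r, p s)
    (ξ : ℝ → ℝ)
    (hξ : ∀ r, ξ r = (2 * Real.exp (-(P r)) / r^(n-1)) *
      ∫ s in (0:ℝ)..r, s^(n-1) * Real.exp (P s) * F s) :
    ∃ C' : ℝ, 0 ≤ C' ∧ ∀ r ∈ Ioc 0 a, |ξ r| ≤ C' * r^2 :=
  xi_vanishes_quadratically_at_vertex_general n a C hC p F hpb hFb P hP ξ hξ
end

section
/- Let n ≥ 3, a > 0, C ≥ 0, and let p, q : (0, a] → ℝ be continuous with |p(r)| ≤ C and |q(r)| ≤ C for all r ∈ (0, a]. Set ψ(r) := (n−1)/r + p(r), F(r) := (n−1)(n−2)/r² + q(r), P(r) := ∫_{a}^{r} p(s) ds, and define ζ(r) := −(e^{−P(r)}/r^{n−1}) · ∫_{0}^{r} s^{n−1}·e^{P(s)}·F(s) ds for r ∈ (0, a]. Then: (i) ζ is continuously differentiable on (0, a] and satisfies ζ′(r) + ψ(r)·ζ(r) + F(r) = 0; and (ii) there exists C′ ≥ 0 such that |ζ(r) + (n−1)/r| ≤ C′ for all r ∈ (0, a]. -/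
/-!
Write `n = m + 3`. The integrating factor `μ(r) = r^{m+2} e^{P(r)}` satisfies `μ' = ψ μ`, so by the
quotient rule `ζ = -(∫_0^r μ F) / μ` solves `ζ' + ψ ζ + F = 0`.

Near the vertex, `μ F = (m+2) (s^{m+1} e^P)' + s^{m+1} e^P (s q - (m+2) p)`. The first term
integrates to `(m+2) r^{m+1} e^{P(r)}` with no contribution from `s = 0`, as `m + 1 ≥ 1`; divided
by `-μ(r)` it gives exactly `-(n-1)/r`. The second term is `O(s^{m+1})`, so its integral is
`O(r^{m+2})` and contributes a bounded term to `ζ`.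
-/

open Set MeasureTheory intervalIntegral

theorem MeasureTheory.IntegrableOn.intervalIntegrable_of_mem_Icc {f : ℝ → ℝ} {b c x y : ℝ}
    (hf : IntegrableOn f (Icc b c)) (hx : x ∈ Icc b c) (hy : y ∈ Icc b c) :
    IntervalIntegrable f volume x y :=
  (hf.mono_set (uIcc_subset_Icc hx hy)).intervalIntegrable

theorem integrableOn_Icc_of_continuousOn_Ioc_of_abs_le {f : ℝ → ℝ} {b c M : ℝ}
    (hf : ContinuousOn f (Ioc b c)) (hM : ∀ x ∈ Ioc b c, |f x| ≤ M) :
    IntegrableOn f (Icc b c) :=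
  (integrableOn_Icc_iff_integrableOn_Ioc).2 <|
    .of_bound measure_Ioc_lt_top (hf.aestronglyMeasurable measurableSet_Ioc) M
      ((ae_restrict_iff' measurableSet_Ioc).2 (.of_forall hM))

theorem hasDerivWithinAt_integral_of_continuousOn_Ioc {f : ℝ → ℝ} {b c d r : ℝ}
    (hf : ContinuousOn f (Ioc b c)) (hfI : IntegrableOn f (Icc b c)) (hd : d ∈ Icc b c)
    (hr : r ∈ Ioc b c) :
    HasDerivWithinAt (fun u => ∫ x in d..u, f x) (f r) (Ioc b c) r := by
  have : Fact (r ∈ Icc b c) := ⟨Ioc_subset_Icc_self hr⟩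
  have hnhds : Ioc b c ∈ nhdsWithin r (Icc b c) :=
    mem_nhdsWithin.2 ⟨Ioi b, isOpen_Ioi, hr.1, fun y hy => ⟨hy.1, hy.2.2⟩⟩
  exact (integral_hasDerivWithinAt_right
    (hfI.intervalIntegrable_of_mem_Icc hd (Ioc_subset_Icc_self hr))
    ⟨Ioc b c, hnhds, hf.aestronglyMeasurable measurableSet_Ioc⟩
    ((hf r hr).mono_of_mem_nhdsWithin hnhds)).mono Ioc_subset_Icc_self

theorem hasDerivWithinAt_pow_mul_exp {P : ℝ → ℝ} {s : Set ℝ} {r p : ℝ} (k : ℕ)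
    (hP : HasDerivWithinAt P p s r) (hr : r ≠ 0) :
    HasDerivWithinAt (fun x => x ^ k * Real.exp (P x))
      (r ^ k * Real.exp (P r) * (k / r + p)) s r := by
  refine ((hasDerivAt_pow k r).hasDerivWithinAt.mul hP.exp).congr_deriv ?_
  rcases k with _ | k
  · simp
  · rw [Nat.add_sub_cancel]
    field_simp
    ring

theorem integral_deriv_pow_succ_mul_exp {p P : ℝ → ℝ} {r : ℝ} (j : ℕ) (hr : 0 ≤ r)
    (hPc : ContinuousOn P (Icc 0 r)) (hPd : ∀ s ∈ Ioo 0 r, HasDerivAt P (p s) s)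
    (hint : IntervalIntegrable
      (fun s => ((j + 1) * s ^ j + s ^ (j + 1) * p s) * Real.exp (P s)) volume 0 r) :
    ∫ s in 0..r, ((j + 1) * s ^ j + s ^ (j + 1) * p s) * Real.exp (P s) =
      r ^ (j + 1) * Real.exp (P r) := by
  refine (integral_eq_sub_of_hasDerivAt_of_le (f := fun s => s ^ (j + 1) * Real.exp (P s)) hr
    ((continuousOn_pow _).mul hPc.rexp) (fun s hs => ?_) hint).trans (by simp)
  refine ((hasDerivAt_pow (j + 1) s).mul (hPd s hs).exp).congr_deriv ?_
  push_cast
  ring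

theorem hasDerivWithinAt_of_integratingFactor {μ ψ F ζ : ℝ → ℝ} {b c d r : ℝ}
    (hμ : HasDerivWithinAt μ (μ r * ψ r) (Ioc b c) r) (hμr : μ r ≠ 0)
    (hμF : ContinuousOn (fun x => μ x * F x) (Ioc b c))
    (hμFI : IntegrableOn (fun x => μ x * F x) (Icc b c)) (hd : d ∈ Icc b c)
    (hζ : ∀ x, ζ x = -(∫ s in d..x, μ s * F s) / μ x) (hr : r ∈ Ioc b c) :
    HasDerivWithinAt ζ (-(ψ r * ζ r + F r)) (Ioc b c) r := by
  have hG := hasDerivWithinAt_integral_of_continuousOn_Ioc hμF hμFI hd hr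
  refine ((hG.neg.div hμ hμr).congr (fun x _ => hζ x) (hζ r)).congr_deriv ?_
  rw [hζ, Pi.neg_apply]
  field_simp
  ring

theorem exists_continuousOn_deriv_of_linear_ode {ζ ψ F : ℝ → ℝ} {s : Set ℝ}
    (hψ : ContinuousOn ψ s) (hF : ContinuousOn F s)
    (hζ : ∀ r ∈ s, HasDerivWithinAt ζ (-(ψ r * ζ r + F r)) s r) :
    ∃ ζ' : ℝ → ℝ, ContinuousOn ζ' s ∧
      ∀ r ∈ s, HasDerivWithinAt ζ (ζ' r) s r ∧ ζ' r + ψ r * ζ r + F r = 0 :=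
  ⟨fun r => -(ψ r * ζ r + F r),
    ((hψ.mul fun r hr => (hζ r hr).continuousWithinAt).add hF).neg,
    fun r hr => ⟨hζ r hr, by ring⟩⟩

theorem abs_integral_le_of_abs_le_mul_pow {f : ℝ → ℝ} {B r : ℝ} (j : ℕ) (hr : 0 ≤ r)
    (hf : ∀ s ∈ Ioc 0 r, |f s| ≤ B * s ^ j) :
    |∫ s in 0..r, f s| ≤ B * (r ^ (j + 1) / (j + 1)) :=
  calc |∫ s in 0..r, f s| ≤ ∫ s in 0..r, B * s ^ j := by
        rw [← Real.norm_eq_abs]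
        refine norm_integral_le_of_norm_le hr (.of_forall hf) ?_
        exact Continuous.intervalIntegrable (by fun_prop) _ _
    _ = B * (r ^ (j + 1) / (j + 1)) := by simp [integral_pow]

section LightCone

variable {a r : ℝ} {p q P F : ℝ → ℝ}

theorem integrableOn_deriv_pow_succ_mul_exp (m : ℕ) (hPc : ContinuousOn P (Icc 0 a))
    (hpI : IntegrableOn p (Icc 0 a)) :
    IntegrableOn (fun s => ((m + 1) * s ^ m + s ^ (m + 1) * p s) * Real.exp (P s))
      (Icc 0 a) := by
  have hc : ContinuousOn (fun s => (m + 1) * s ^ m * Real.exp (P s)) (Icc 0 a) := by fun_prop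
  have hc' : ContinuousOn (fun s => s ^ (m + 1) * Real.exp (P s)) (Icc 0 a) := by fun_prop
  exact ((hc.integrableOn_compact isCompact_Icc).add
    (hpI.mul_continuousOn hc' isCompact_Icc)).congr_fun
      (fun s _ => by simp only [Pi.add_apply]; ring) measurableSet_Icc

theorem integrableOn_residual (m : ℕ) (hPc : ContinuousOn P (Icc 0 a))
    (hpI : IntegrableOn p (Icc 0 a)) (hqI : IntegrableOn q (Icc 0 a)) :
    IntegrableOn (fun s => s ^ (m + 1) * Real.exp (P s) * (s * q s - (m + 2) * p s))
      (Icc 0 a) := by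
  have hc : ContinuousOn (fun s => s ^ (m + 2) * Real.exp (P s)) (Icc 0 a) := by fun_prop
  have hc' : ContinuousOn (fun s => (m + 2) * s ^ (m + 1) * Real.exp (P s)) (Icc 0 a) := by
    fun_prop
  exact ((hqI.mul_continuousOn hc isCompact_Icc).sub
    (hpI.mul_continuousOn hc' isCompact_Icc)).congr_fun
      (fun s _ => by simp only [Pi.sub_apply]; ring) measurableSet_Icc

theorem eqOn_weighted_source {m : ℕ} (hF : ∀ s, F s = (m + 2) * (m + 1) / s ^ 2 + q s) :
    EqOn (fun s => s ^ (m + 2) * Real.exp (P s) * F s)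
      (fun s => (m + 2) * (((m + 1) * s ^ m + s ^ (m + 1) * p s) * Real.exp (P s)) +
        s ^ (m + 1) * Real.exp (P s) * (s * q s - (m + 2) * p s)) (Ioi 0) := by
  intro s (hs : 0 < s)
  simp only [hF]
  field_simp
  ring

theorem integrableOn_weighted_source {m : ℕ}
    (hF : ∀ s, F s = (m + 2) * (m + 1) / s ^ 2 + q s) (hPc : ContinuousOn P (Icc 0 a))
    (hpI : IntegrableOn p (Icc 0 a)) (hqI : IntegrableOn q (Icc 0 a)) :
    IntegrableOn (fun s => s ^ (m + 2) * Real.exp (P s) * F s) (Icc 0 a) := by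
  rw [integrableOn_Icc_iff_integrableOn_Ioc]
  refine IntegrableOn.congr_fun ?_ ((eqOn_weighted_source (p := p) hF).symm.mono fun s hs => hs.1)
    measurableSet_Ioc
  exact IntegrableOn.mono_set (((integrableOn_deriv_pow_succ_mul_exp m hPc hpI).const_mul _).add
    (integrableOn_residual m hPc hpI hqI)) Ioc_subset_Icc_self

theorem integral_weighted_source {m : ℕ} (hF : ∀ s, F s = (m + 2) * (m + 1) / s ^ 2 + q s)
    (hPc : ContinuousOn P (Icc 0 a))
    (hPd : ∀ s ∈ Ioc 0 a, HasDerivWithinAt P (p s) (Ioc 0 a) s)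
    (hpI : IntegrableOn p (Icc 0 a)) (hqI : IntegrableOn q (Icc 0 a)) (hr : r ∈ Ioc 0 a) :
    ∫ s in 0..r, s ^ (m + 2) * Real.exp (P s) * F s =
      (m + 2) * (r ^ (m + 1) * Real.exp (P r)) +
        ∫ s in 0..r, s ^ (m + 1) * Real.exp (P s) * (s * q s - (m + 2) * p s) := by
  have h0 : (0 : ℝ) ∈ Icc 0 a := ⟨le_rfl, hr.1.le.trans hr.2⟩
  have hD := (integrableOn_deriv_pow_succ_mul_exp m hPc hpI).intervalIntegrable_of_mem_Icc h0
    (Ioc_subset_Icc_self hr)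
  have hW := (integrableOn_residual m hPc hpI hqI).intervalIntegrable_of_mem_Icc h0
    (Ioc_subset_Icc_self hr)
  have hPd' (s) (hs : s ∈ Ioo 0 r) : HasDerivAt P (p s) s :=
    (hPd s ⟨hs.1, hs.2.le.trans hr.2⟩).hasDerivAt (Ioc_mem_nhds hs.1 (hs.2.trans_le hr.2))
  rw [integral_congr_ae (.of_forall fun s hs => eqOn_weighted_source hF
      (by rw [uIoc_of_le hr.1.le] at hs; exact hs.1)),
    integral_add (hD.const_mul _) hW, intervalIntegral.integral_const_mul,
    integral_deriv_pow_succ_mul_exp m hr.1.le (hPc.mono (Icc_subset_Icc_right hr.2)) hPd' hD]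

theorem neg_integral_weighted_source_div_add {m : ℕ}
    (hF : ∀ s, F s = (m + 2) * (m + 1) / s ^ 2 + q s) (hPc : ContinuousOn P (Icc 0 a))
    (hPd : ∀ s ∈ Ioc 0 a, HasDerivWithinAt P (p s) (Ioc 0 a) s)
    (hpI : IntegrableOn p (Icc 0 a)) (hqI : IntegrableOn q (Icc 0 a)) (hr : r ∈ Ioc 0 a) :
    -(∫ s in 0..r, s ^ (m + 2) * Real.exp (P s) * F s) / (r ^ (m + 2) * Real.exp (P r)) +
        (m + 2) / r =
      -(∫ s in 0..r, s ^ (m + 1) * Real.exp (P s) * (s * q s - (m + 2) * p s)) /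
        (r ^ (m + 2) * Real.exp (P r)) := by
  have := hr.1.ne'
  rw [integral_weighted_source hF hPc hPd hpI hqI hr]
  field_simp
  ring

theorem abs_residual_le {C c s : ℝ} (m : ℕ) (hs : s ∈ Ioc 0 a)
    (hps : |p s| ≤ C) (hqs : |q s| ≤ C) (hPs : P s ≤ c) :
    |s ^ (m + 1) * Real.exp (P s) * (s * q s - (m + 2) * p s)| ≤
      Real.exp c * ((a + (m + 2)) * C) * s ^ (m + 1) := by
  have hs0 := hs.1
  have hdiff : |s * q s - (m + 2) * p s| ≤ (a + (m + 2)) * C :=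
    calc |s * q s - (m + 2) * p s| ≤ s * |q s| + (m + 2) * |p s| := by
          refine (abs_sub _ _).trans ?_
          rw [abs_mul, abs_mul, abs_of_pos hs0, abs_of_pos (by positivity : (0 : ℝ) < m + 2)]
      _ ≤ a * C + (m + 2) * C :=
          add_le_add (mul_le_mul hs.2 hqs (abs_nonneg _) (hs0.le.trans hs.2)) (by gcongr)
      _ = (a + (m + 2)) * C := by ring
  rw [abs_mul, abs_mul, abs_of_pos (by positivity), abs_of_pos (Real.exp_pos _)]
  calc s ^ (m + 1) * Real.exp (P s) * |s * q s - (m + 2) * p s|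
      ≤ s ^ (m + 1) * Real.exp c * ((a + (m + 2)) * C) := by gcongr
    _ = Real.exp c * ((a + (m + 2)) * C) * s ^ (m + 1) := by ring

theorem abs_integral_residual_div_le {m : ℕ} {C c : ℝ}
    (hpb : ∀ s ∈ Ioc 0 a, |p s| ≤ C) (hqb : ∀ s ∈ Ioc 0 a, |q s| ≤ C)
    (hPb : ∀ s ∈ Ioc 0 a, |P s| ≤ c) (hr : r ∈ Ioc 0 a) :
    |(∫ s in 0..r, s ^ (m + 1) * Real.exp (P s) * (s * q s - (m + 2) * p s)) /
        (r ^ (m + 2) * Real.exp (P r))| ≤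
      Real.exp c * ((a + (m + 2)) * C) / (m + 2) * Real.exp c := by
  have hr0 := hr.1
  have hI := abs_integral_le_of_abs_le_mul_pow (m + 1) hr0.le fun s hs =>
    have hs' : s ∈ Ioc 0 a := ⟨hs.1, hs.2.trans hr.2⟩
    abs_residual_le m hs' (hpb s hs') (hqb s hs') (abs_le.1 (hPb s hs')).2
  push_cast at hI
  rw [abs_div, abs_of_pos (by positivity : 0 < r ^ (m + 2) * Real.exp (P r))]
  calc |_| / (r ^ (m + 2) * Real.exp (P r))
      ≤ Real.exp c * ((a + (m + 2)) * C) * (r ^ (m + 1 + 1) / (m + 1 + 1)) /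
          (r ^ (m + 2) * Real.exp (-c)) := by
        gcongr
        · exact (abs_nonneg _).trans hI
        · exact (abs_le.1 (hPb r hr)).1
    _ = Real.exp c * ((a + (m + 2)) * C) / (m + 2) * Real.exp c := by
        rw [Real.exp_neg]
        field_simp
        ring

end LightCone

/-- The last light-cone constraint `ζ′ + ψζ + F = 0` with `ψ = (n−1)/r + p`,
`F = (n−1)(n−2)/r² + q` (`p, q` continuous bounded) has the explicit solution
`ζ(r) = −(e^{−P(r)}/r^{n−1})·∫_0^r s^{n−1}e^{P(s)}F(s) ds`, which is C¹ on `(0,a]`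
and satisfies `ζ(r) = −(n−1)/r + O(1)` near the vertex. -/
theorem zeta_constraint_solution (n : ℕ) (hn : 3 ≤ n)
    (a C : ℝ) (ha : 0 < a) (hC : 0 ≤ C)
    (p q : ℝ → ℝ)
    (hpc : ContinuousOn p (Ioc 0 a)) (hqc : ContinuousOn q (Ioc 0 a))
    (hpb : ∀ r ∈ Ioc 0 a, |p r| ≤ C)
    (hqb : ∀ r ∈ Ioc 0 a, |q r| ≤ C)
    (ψ : ℝ → ℝ) (hψ : ∀ r, ψ r = ((n:ℝ)-1)/r + p r)
    (F : ℝ → ℝ) (hF : ∀ r, F r = ((n:ℝ)-1)*((n:ℝ)-2)/r^2 + q r)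
    (P : ℝ → ℝ) (hP : ∀ r, P r = ∫ s in a..r, p s)
    (ζ : ℝ → ℝ)
    (hζ : ∀ r, ζ r = -(Real.exp (-(P r)) / r^(n-1)) *
      ∫ s in (0:ℝ)..r, s^(n-1) * Real.exp (P s) * F s) :
    (∃ ζ' : ℝ → ℝ, ContinuousOn ζ' (Ioc 0 a) ∧
      ∀ r ∈ Ioc 0 a, HasDerivWithinAt ζ (ζ' r) (Ioc 0 a) r ∧
        ζ' r + ψ r * ζ r + F r = 0) ∧
    (∃ C' : ℝ, 0 ≤ C' ∧ ∀ r ∈ Ioc 0 a, |ζ r + ((n:ℝ)-1)/r| ≤ C') := by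
  obtain ⟨m, rfl⟩ : ∃ m, n = m + 3 := ⟨n - 3, by omega⟩
  have hk : ((m + 3 : ℕ) : ℝ) - 1 = m + 2 := by push_cast; ring
  replace hψ : ∀ r, ψ r = (m + 2) / r + p r := fun r => by rw [hψ, hk]
  replace hF : ∀ r, F r = (m + 2) * (m + 1) / r ^ 2 + q r := fun r => by
    rw [hF, hk]; push_cast; ring
  replace hζ : ∀ r, ζ r = -(∫ s in 0..r, s ^ (m + 2) * Real.exp (P s) * F s) /
      (r ^ (m + 2) * Real.exp (P r)) := fun r => by
    rw [hζ, show m + 3 - 1 = m + 2 from rfl, Real.exp_neg]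
    ring
  have hpI := integrableOn_Icc_of_continuousOn_Ioc_of_abs_le hpc hpb
  have hqI := integrableOn_Icc_of_continuousOn_Ioc_of_abs_le hqc hqb
  have hPc : ContinuousOn P (Icc 0 a) := by
    rw [funext hP, ← uIcc_of_le ha.le, uIcc_comm]
    exact continuousOn_primitive_interval (by rwa [uIcc_comm, uIcc_of_le ha.le])
  have hPd (r) (hr : r ∈ Ioc 0 a) : HasDerivWithinAt P (p r) (Ioc 0 a) r := by
    rw [funext hP]
    exact hasDerivWithinAt_integral_of_continuousOn_Ioc hpc hpI (right_mem_Icc.2 ha.le) hr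
  have hFc : ContinuousOn F (Ioc 0 a) := by
    rw [funext hF]
    fun_prop (disch := exact fun r hr => pow_ne_zero 2 hr.1.ne')
  have hψc : ContinuousOn ψ (Ioc 0 a) := by
    rw [funext hψ]
    fun_prop (disch := exact fun r hr => hr.1.ne')
  refine ⟨exists_continuousOn_deriv_of_linear_ode hψc hFc fun r hr => ?_, ?_⟩
  · have hμ : HasDerivWithinAt (fun x => x ^ (m + 2) * Real.exp (P x))
        (r ^ (m + 2) * Real.exp (P r) * ψ r) (Ioc 0 a) r := by
      rw [hψ]
      exact_mod_cast hasDerivWithinAt_pow_mul_exp (m + 2) (hPd r hr) hr.1.ne'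
    have hPc' : ContinuousOn P (Ioc 0 a) := hPc.mono Ioc_subset_Icc_self
    exact hasDerivWithinAt_of_integratingFactor hμ (by have := hr.1; positivity)
      (by fun_prop) (integrableOn_weighted_source hF hPc hpI hqI) (left_mem_Icc.2 ha.le) hζ hr
  · obtain ⟨c, hc⟩ := isCompact_Icc.exists_bound_of_continuousOn hPc
    refine ⟨Real.exp c * ((a + (m + 2)) * C) / (m + 2) * Real.exp c,
      by have := hC; have := ha; positivity, fun r hr => ?_⟩
    rw [hk, hζ, neg_integral_weighted_source_div_add hF hPc hPd hpI hqI hr, neg_div, abs_neg]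
    exact abs_integral_residual_div_le hpb hqb (fun s hs => hc s (Ioc_subset_Icc_self hs)) hr
end
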